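/- arXiv:1905.03208 — 3 statements merged into one kernel-verified Lean document; each statement's English description precedes it below -/
import Mathlib

section
/- The category Cu_sc of scaled Cu-semigroups and scaled Cu-morphisms is bicomplete: every functor from a small category to Cu_sc has both a limit and a colimit. -/
/-!
STATEMENT 9: The category Cu_sc of scaled Cu-semigroups and scaled Cu-morphisms is
bicomplete: every functor from a small category to Cu_sc has both a limit and a
colimit.
-/

universe u v w

/-- `x` is *way below* `y` (sequential compact containment `x ≪ y`). -/
def WayBelow {M : Type u} [Preorder M] (x y : M) : Prop :=
  ∀ s : ℕ → M, Monotone s → ∀ a : M, IsLUB (Set.range s) a → y ≤ a → ∃ n, x ≤ s n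

theorem WayBelow.le {M : Type u} [Preorder M] {x y : M} (h : WayBelow x y) : x ≤ y := by
  obtain ⟨n, hn⟩ := h (fun _ => y) monotone_const y (by simp [Set.range_const]) le_rfl
  exact hn

theorem WayBelow.mono {M : Type u} [Preorder M] {x' x y y' : M} (h : WayBelow x y)
    (hx : x' ≤ x) (hy : y ≤ y') : WayBelow x' y' := fun s hs a ha hya => by
  obtain ⟨n, hn⟩ := h s hs a ha (hy.trans hya)
  exact ⟨n, hx.trans hn⟩

theorem WayBelow.trans {M : Type u} [Preorder M] {x y z : M} (h : WayBelow x y)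
    (h' : WayBelow y z) : WayBelow x z := h'.mono h.le le_rfl

/-- A map preserves suprema of increasing sequences. -/
def PreservesSeqSup {M : Type u} {N : Type v} [Preorder M] [Preorder N] (f : M → N) : Prop :=
  ∀ s : ℕ → M, Monotone s → ∀ a : M, IsLUB (Set.range s) a →
    IsLUB (Set.range fun n => f (s n)) (f a)

/-- Axiom (O1): every increasing sequence has a supremum. -/
def SeqSupExists (M : Type u) [Preorder M] : Prop :=
  ∀ s : ℕ → M, Monotone s → ∃ a : M, IsLUB (Set.range s) a

/-- Axiom (O4): suprema of increasing sequences are additive. -/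
def SeqSupAdditive (M : Type u) [AddCommMonoid M] [Preorder M] : Prop :=
  ∀ s t : ℕ → M, Monotone s → Monotone t → ∀ a b : M,
    IsLUB (Set.range s) a → IsLUB (Set.range t) b →
    IsLUB (Set.range fun n => s n + t n) (a + b)

/-- The axioms of a positively ordered monoid: the partial order is translation
invariant and `0` is the least element. -/
structure PoMAxioms (M : Type u) [AddCommMonoid M] [PartialOrder M] : Prop where
  add_le_add_left : ∀ a b : M, a ≤ b → ∀ c : M, c + a ≤ c + b
  zero_le : ∀ a : M, 0 ≤ a

/-- A `PoM`-morphism: preserves addition, order and `0`. -/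
structure IsPoMHom {M : Type u} {N : Type v} [AddCommMonoid M] [PartialOrder M]
    [AddCommMonoid N] [PartialOrder N] (f : M → N) : Prop where
  map_zero : f 0 = 0
  map_add : ∀ x y : M, f (x + y) = f x + f y
  mono : Monotone f

/-- The axioms of an abstract Cuntz semigroup (`Cu`-semigroup). -/
structure CuAxioms (M : Type u) [AddCommMonoid M] [PartialOrder M] extends PoMAxioms M : Prop where
  O1 : SeqSupExists M
  O2 : ∀ x : M, ∃ s : ℕ → M, (∀ n, WayBelow (s n) (s (n + 1))) ∧ IsLUB (Set.range s) x
  O3 : ∀ x' x y' y : M, WayBelow x' x → WayBelow y' y → WayBelow (x' + y') (x + y)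
  O4 : SeqSupAdditive M

/-- A `Cu`-morphism: preserves addition, order, `0`, way-below, and suprema of
increasing sequences. -/
structure IsCuHom {M : Type u} {N : Type v} [AddCommMonoid M] [PartialOrder M]
    [AddCommMonoid N] [PartialOrder N] (f : M → N) extends IsPoMHom f : Prop where
  map_wayBelow : ∀ x y : M, WayBelow x y → WayBelow (f x) (f y)
  map_seqSup : PreservesSeqSup f

/-- An ideal of a `Cu`-semigroup: a downward hereditary submonoid that is closed
under suprema of increasing sequences. -/
structure IsCuIdeal {M : Type u} [AddCommMonoid M] [PartialOrder M] (I : Set M) : Prop where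
  zero_mem : (0 : M) ∈ I
  add_mem : ∀ x y : M, x ∈ I → y ∈ I → x + y ∈ I
  lower : ∀ x y : M, x ≤ y → y ∈ I → x ∈ I
  seqSup_mem : ∀ s : ℕ → M, Monotone s → (∀ n, s n ∈ I) → ∀ a : M, IsLUB (Set.range s) a → a ∈ I

/-- A scale on a Cu-semigroup: a downward hereditary subset, closed under suprema of
increasing sequences, generating the semigroup as an ideal. -/
structure IsScale {M : Type u} [AddCommMonoid M] [PartialOrder M] (A : Set M) : Prop where
  lower : ∀ x y : M, x ≤ y → y ∈ A → x ∈ A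
  seqSup_mem : ∀ s : ℕ → M, Monotone s → (∀ n, s n ∈ A) → ∀ a : M, IsLUB (Set.range s) a → a ∈ A
  generates : ∀ I : Set M, IsCuIdeal I → A ⊆ I → I = Set.univ

/-- The category of scaled Cu-semigroups and scaled Cu-morphisms. -/
structure CuscCat : Type (u + 1) where
  carrier : Type u
  [addCommMonoid : AddCommMonoid carrier]
  [partialOrder : PartialOrder carrier]
  cu : CuAxioms carrier
  scale : Set carrier
  isScale : IsScale scale

attribute [instance] CuscCat.addCommMonoid CuscCat.partialOrder

instance : CategoryTheory.Category CuscCat.{u} where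
  Hom S T := { f : S.carrier → T.carrier // IsCuHom f ∧ ∀ x ∈ S.scale, f x ∈ T.scale }
  id S := ⟨id, ⟨⟨rfl, fun _ _ => rfl, fun _ _ h => h⟩, fun _ _ h => h, fun _ _ _ ha => ha⟩,
    fun _ hx => hx⟩
  comp := fun {X Y Z} f g => ⟨g.1 ∘ f.1, by
    constructor
    · refine ⟨⟨?_, ?_, (g.2.1.mono.comp f.2.1.mono)⟩, ?_, ?_⟩
      · simp [Function.comp, f.2.1.map_zero, g.2.1.map_zero]
      · intro x y; simp [Function.comp, f.2.1.map_add, g.2.1.map_add]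
      · exact fun x y h => g.2.1.map_wayBelow _ _ (f.2.1.map_wayBelow _ _ h)
      · exact fun s hs a ha => g.2.1.map_seqSup _ (f.2.1.mono.comp hs) _ (f.2.1.map_seqSup s hs a ha)
    · exact fun x hx => g.2.2 _ (f.2.2 x hx)⟩

open CategoryTheory

/-!
Limits and colimits are both built as completions of abstract bases: a monoid with a transitive,
additive relation `≺` admitting interpolation, completed by `≺`-increasing sequences modulo mutual
cofinality, is a Cu-semigroup, and every map sending `≺` to `≪` extends to a Cu-morphism by taking
suprema. The bases are made of `≪`-increasing maps out of the binary tree in its in-order, which is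
dense; every element of a Cu-semigroup is the supremum, along the right spine, of such a map
below it.

For the limit, the basis consists of tree-paths of compatible families with pointwise `≪`. The
projections extend "supremum along the spine"; the limit is the ideal generated by the elements
whose projections lie in the scales, scaled by those elements. A cone lifts by sending `t` to the
class of the paths read off the left subtrees along the spine of the tree-path below `t`.

For the colimit, the basis consists of formal sums of tree-paths in the objects of the diagram,
compared simultaneously in all unscaled cocones. Evaluation in a cocone gives the descended map.
Every element is a supremum of sums of images of the legs, which gives uniqueness and shows that
the hereditary, sup-closed hull of the images of the scales generates.
-/

open Set

theorem isLUB_range_iff {N : Type*} [Preorder N] {s : ℕ → N} {a : N} :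
    IsLUB (range s) a ↔ (∀ n, s n ≤ a) ∧ ∀ b, (∀ n, s n ≤ b) → a ≤ b := by
  simp [IsLUB, IsLeast, upperBounds, lowerBounds]

theorem isLUB_range_const {N : Type*} [Preorder N] (a : N) : IsLUB (range fun _ : ℕ => a) a :=
  isLUB_range_iff.2 ⟨fun _ => le_rfl, fun _ hb => hb 0⟩

instance {M : Type*} [Preorder M] : IsTrans M WayBelow := ⟨fun _ _ _ => WayBelow.trans⟩

theorem WayBelow.exists_le {M : Type*} [Preorder M] {x y : M} (h : WayBelow x y) {s : ℕ → M}
    (hs : Monotone s) (hy : IsLUB (range s) y) : ∃ n, x ≤ s n :=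
  h s hs y hy le_rfl

section PoM

variable {M : Type*} [AddCommMonoid M] [PartialOrder M]

theorem PoMAxioms.add_le_add (pom : PoMAxioms M) {a b c d : M} (h₁ : a ≤ b) (h₂ : c ≤ d) :
    a + c ≤ b + d :=
  calc a + c ≤ a + d := pom.add_le_add_left _ _ h₂ a
    _ = d + a := add_comm _ _
    _ ≤ d + b := pom.add_le_add_left _ _ h₁ d
    _ = b + d := add_comm _ _

theorem PoMAxioms.wayBelow_zero (pom : PoMAxioms M) (x : M) : WayBelow (0 : M) x :=
  fun _ _ _ _ _ => ⟨0, pom.zero_le _⟩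

theorem PoMAxioms.multiset_sum_map_le (pom : PoMAxioms M) {α : Type*} {f g : α → M}
    (s : Multiset α) (h : ∀ x ∈ s, f x ≤ g x) : (s.map f).sum ≤ (s.map g).sum := by
  induction s using Multiset.induction_on with
  | empty => simp
  | cons a s ih =>
    simp only [Multiset.map_cons, Multiset.sum_cons]
    exact pom.add_le_add (h a (Multiset.mem_cons_self a s))
      (ih fun x hx => h x (Multiset.mem_cons_of_mem hx))

end PoM

namespace CuAxioms

variable {M : Type*} [AddCommMonoid M] [PartialOrder M] (cu : CuAxioms M)
include cu

theorem multiset_sum_map_wayBelow {α : Type*} {f g : α → M} (s : Multiset α)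
    (h : ∀ x ∈ s, WayBelow (f x) (g x)) : WayBelow (s.map f).sum (s.map g).sum := by
  induction s using Multiset.induction_on with
  | empty => simpa using cu.wayBelow_zero (0 : M)
  | cons a s ih =>
    simp only [Multiset.map_cons, Multiset.sum_cons]
    exact cu.O3 _ _ _ _ (h a (Multiset.mem_cons_self a s))
      (ih fun x hx => h x (Multiset.mem_cons_of_mem hx))

noncomputable def seqSup (s : ℕ → M) (hs : Monotone s) : M := (cu.O1 s hs).choose

theorem isLUB_seqSup (s : ℕ → M) (hs : Monotone s) : IsLUB (range s) (cu.seqSup s hs) :=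
  (cu.O1 s hs).choose_spec

theorem le_seqSup (s : ℕ → M) {hs : Monotone s} (n : ℕ) : s n ≤ cu.seqSup s hs :=
  (isLUB_range_iff.1 (cu.isLUB_seqSup s hs)).1 n

theorem seqSup_le (s : ℕ → M) {hs : Monotone s} {b : M} (hb : ∀ n, s n ≤ b) :
    cu.seqSup s hs ≤ b :=
  (isLUB_range_iff.1 (cu.isLUB_seqSup s hs)).2 b hb

/-- A rapidly increasing sequence for `x`, as provided by (O2). -/
noncomputable def rapidSeq (x : M) : ℕ → M := (cu.O2 x).choose

theorem rapidSeq_wayBelow_succ (x : M) (n : ℕ) :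
    WayBelow (cu.rapidSeq x n) (cu.rapidSeq x (n + 1)) :=
  (cu.O2 x).choose_spec.1 n

theorem isLUB_rapidSeq (x : M) : IsLUB (range (cu.rapidSeq x)) x :=
  (cu.O2 x).choose_spec.2

theorem rapidSeq_wayBelow_of_lt (x : M) {n m : ℕ} (h : n < m) :
    WayBelow (cu.rapidSeq x n) (cu.rapidSeq x m) :=
  Nat.rel_of_forall_rel_succ_of_lt WayBelow (cu.rapidSeq_wayBelow_succ x) h

theorem rapidSeq_mono (x : M) : Monotone (cu.rapidSeq x) :=
  monotone_nat_of_le_succ fun n => (cu.rapidSeq_wayBelow_succ x n).le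

theorem rapidSeq_le (x : M) (n : ℕ) : cu.rapidSeq x n ≤ x :=
  (isLUB_range_iff.1 (cu.isLUB_rapidSeq x)).1 n

theorem rapidSeq_wayBelow (x : M) (n : ℕ) : WayBelow (cu.rapidSeq x n) x :=
  (cu.rapidSeq_wayBelow_succ x n).mono le_rfl (cu.rapidSeq_le x (n + 1))

theorem exists_le_rapidSeq {x y : M} (h : WayBelow x y) : ∃ n, x ≤ cu.rapidSeq y n :=
  h.exists_le (cu.rapidSeq_mono y) (cu.isLUB_rapidSeq y)

theorem exists_wayBelow_between {x y : M} (h : WayBelow x y) :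
    ∃ z, WayBelow x z ∧ WayBelow z y := by
  obtain ⟨n, hn⟩ := cu.exists_le_rapidSeq h
  exact ⟨_, (cu.rapidSeq_wayBelow_succ y n).mono hn le_rfl, cu.rapidSeq_wayBelow y (n + 1)⟩

end CuAxioms

/-! ### Paths indexed by the binary tree -/

/-- Nodes of the infinite binary tree, as paths from the root (`false` = left, `true` = right). -/
abbrev TreeNode := List Bool

namespace TreeNode

/-- The in-order (left subtree < node < right subtree) linear order of the binary tree. It is
dense and the right spine is cofinal in it, so that maps out of it that are `≪`-increasing
allow interpolation at every step and have a supremum computed along the spine. -/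
inductive Lt : TreeNode → TreeNode → Prop
  | false_nil (s : TreeNode) : Lt (false :: s) []
  | nil_true (t : TreeNode) : Lt [] (true :: t)
  | false_true (s t : TreeNode) : Lt (false :: s) (true :: t)
  | cons (b : Bool) {s t : TreeNode} : Lt s t → Lt (b :: s) (b :: t)

theorem Lt.trans {a b c : TreeNode} (h₁ : Lt a b) (h₂ : Lt b c) : Lt a c := by
  induction h₁ generalizing c with
  | false_nil s => cases h₂ with | nil_true t => exact .false_true s t
  | nil_true => cases h₂ with | cons => exact .nil_true _
  | false_true => cases h₂ with | cons => exact .false_true _ _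
  | cons _ _ ih =>
    cases h₂ with
    | false_nil => exact .false_nil _
    | false_true => exact .false_true _ _
    | cons _ h' => exact .cons _ (ih h')

abbrev spine (n : ℕ) : TreeNode := List.replicate n true

theorem Lt.append_left (w : TreeNode) {s t : TreeNode} (h : Lt s t) : Lt (w ++ s) (w ++ t) := by
  induction w with
  | nil => exact h
  | cons b w ih => exact .cons b ih

theorem append_false_lt (w s : TreeNode) : Lt (w ++ false :: s) w := by
  simpa using Lt.append_left w (.false_nil s)

theorem lt_append_true (w t : TreeNode) : Lt w (w ++ true :: t) := by
  simpa using Lt.append_left w (.nil_true t)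

theorem lt_append_true_nil (w : TreeNode) : Lt w (w ++ [true]) := lt_append_true w []

theorem lt_spine_append {w : TreeNode} {n : ℕ} (h : w.length < n) (z : TreeNode) :
    Lt w (spine n ++ z) := by
  induction w generalizing n with
  | nil =>
    obtain ⟨n, rfl⟩ := Nat.exists_eq_succ_of_ne_zero (by omega : n ≠ 0)
    exact .nil_true _
  | cons b w ih =>
    obtain ⟨n, rfl⟩ := Nat.exists_eq_succ_of_ne_zero (by omega : n ≠ 0)
    cases b with
    | false => exact .false_true _ _
    | true => exact .cons true (ih (by simpa using h))

theorem lt_spine {w : TreeNode} {n : ℕ} (h : w.length < n) : Lt w (spine n) := by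
  simpa using lt_spine_append h []

theorem spine_lt_spine {n m : ℕ} (h : n < m) : Lt (spine n) (spine m) :=
  lt_spine (by simpa using h)

theorem append_false_lt_spine_append {w : TreeNode} {n : ℕ} (h : w.length < n) (s z : TreeNode) :
    Lt (w ++ false :: s) (spine n ++ z) :=
  (append_false_lt w s).trans (lt_spine_append h z)

end TreeNode

open TreeNode

/-! ### Completion of an abstract basis -/

/-- An abstract basis (Antoine–Perera–Thiel): the data from which a Cu-semigroup is built as the
completion by `rel`-increasing sequences, `rel` playing the role of `≪`. -/
structure AbstractBasis (P : Type*) [AddCommMonoid P] where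
  rel : P → P → Prop
  rel_trans : ∀ {a b c}, rel a b → rel b c → rel a c
  zero_rel : ∀ a, rel 0 a
  add_rel_add : ∀ {a b c d}, rel a b → rel c d → rel (a + c) (b + d)
  exists_between : ∀ {a b}, rel a b → ∃ c, rel a c ∧ rel c b

namespace AbstractBasis

variable {P : Type*} [AddCommMonoid P] (R : AbstractBasis P)

instance : IsTrans P R.rel := ⟨fun _ _ _ => R.rel_trans⟩

def incSeq : AddSubmonoid (ℕ → P) where
  carrier := {σ | ∀ n, R.rel (σ n) (σ (n + 1))}
  zero_mem' := fun _ => R.zero_rel 0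
  add_mem' := fun hσ hτ n => R.add_rel_add (hσ n) (hτ n)

variable {R}

theorem rel_incSeq_of_lt (σ : R.incSeq) {n m : ℕ} (h : n < m) : R.rel (σ.1 n) (σ.1 m) :=
  Nat.rel_of_forall_rel_succ_of_lt R.rel σ.2 h

theorem rel_incSeq_of_le (σ : R.incSeq) {a : P} {m m' : ℕ} (h : R.rel a (σ.1 m))
    (hm : m ≤ m') : R.rel a (σ.1 m') := by
  rcases hm.eq_or_lt with rfl | hm
  · exact h
  · exact R.rel_trans h (rel_incSeq_of_lt σ hm)

theorem eventually_rel_incSeq (σ : R.incSeq) {a : P} (h : ∃ m, R.rel a (σ.1 m)) :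
    ∀ᶠ m in Filter.atTop, R.rel a (σ.1 m) := by
  obtain ⟨m, hm⟩ := h
  exact Filter.eventually_atTop.2 ⟨m, fun _ => rel_incSeq_of_le σ hm⟩

instance : Preorder R.incSeq where
  le σ τ := ∀ n, ∃ m, R.rel (σ.1 n) (τ.1 m)
  le_refl σ n := ⟨n + 1, σ.2 n⟩
  le_trans σ τ ρ h₁ h₂ n := by
    obtain ⟨m, hm⟩ := h₁ n
    obtain ⟨k, hk⟩ := h₂ m
    exact ⟨k, R.rel_trans hm hk⟩

theorem incSeq_add_le_add {σ σ' τ τ' : R.incSeq} (h₁ : σ ≤ σ') (h₂ : τ ≤ τ') :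
    σ + τ ≤ σ' + τ' := fun n => by
  obtain ⟨m₁, hm₁⟩ := h₁ n
  obtain ⟨m₂, hm₂⟩ := h₂ n
  exact ⟨max m₁ m₂, R.add_rel_add (rel_incSeq_of_le σ' hm₁ (le_max_left _ _))
    (rel_incSeq_of_le τ' hm₂ (le_max_right _ _))⟩

variable (R)

def seqCon : AddCon R.incSeq where
  r σ τ := σ ≤ τ ∧ τ ≤ σ
  iseqv := ⟨fun _ => ⟨le_rfl, le_rfl⟩, fun h => ⟨h.2, h.1⟩,
    fun h₁ h₂ => ⟨h₁.1.trans h₂.1, h₂.2.trans h₁.2⟩⟩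
  add' h₁ h₂ := ⟨incSeq_add_le_add h₁.1 h₂.1, incSeq_add_le_add h₁.2 h₂.2⟩

def Completion : Type _ := R.seqCon.Quotient

instance : AddCommMonoid R.Completion := inferInstanceAs (AddCommMonoid R.seqCon.Quotient)

variable {R}

namespace Completion

def mk (σ : R.incSeq) : R.Completion := (σ : R.seqCon.Quotient)

theorem mk_surjective : Function.Surjective (mk : R.incSeq → R.Completion) :=
  Quotient.exists_rep

@[simp] theorem mk_add (σ τ : R.incSeq) : mk (σ + τ) = mk σ + mk τ := rfl

instance : PartialOrder R.Completion where
  le := Quotient.lift₂ (fun σ τ : R.incSeq => σ ≤ τ) fun _ _ _ _ h₁ h₂ =>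
    propext ⟨fun h => h₁.2.trans (h.trans h₂.1), fun h => h₁.1.trans (h.trans h₂.2)⟩
  le_refl := Quotient.ind fun σ => le_refl σ
  le_trans := by
    rintro ⟨σ⟩ ⟨τ⟩ ⟨ρ⟩
    exact le_trans (a := σ) (b := τ) (c := ρ)
  le_antisymm := by
    rintro ⟨σ⟩ ⟨τ⟩ h₁ h₂
    exact Quotient.sound ⟨h₁, h₂⟩

theorem mk_le_mk {σ τ : R.incSeq} : mk σ ≤ mk τ ↔ σ ≤ τ := Iff.rfl

theorem pomAxioms : PoMAxioms R.Completion where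
  add_le_add_left := by
    rintro ⟨σ⟩ ⟨τ⟩ h ⟨ρ⟩
    exact incSeq_add_le_add (le_refl ρ) h
  zero_le := by
    rintro ⟨_⟩
    exact fun _ => ⟨0, R.zero_rel _⟩


section Sup

variable (x : ℕ → R.Completion)

noncomputable def rep (k : ℕ) : R.incSeq := Quotient.out (x k)

theorem mk_rep (k : ℕ) : mk (rep x k) = x k := Quotient.out_eq (x k)

variable {x} (hx : Monotone x)
include hx

theorem rep_le_rep {i k : ℕ} (h : i ≤ k) : rep x i ≤ rep x k := by
  rw [← mk_le_mk, mk_rep, mk_rep]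
  exact hx h

theorem exists_diagIndex_succ (n prev : ℕ) : ∃ m,
    (∀ i ≤ n + 1, ∀ j ≤ n + 1, R.rel ((rep x i).1 j) ((rep x (n + 1)).1 m)) ∧
      R.rel ((rep x n).1 prev) ((rep x (n + 1)).1 m) := by
  have hIic := Set.finite_Iic (n + 1)
  refine (((Filter.eventually_all_finite hIic).2 fun i hi =>
    (Filter.eventually_all_finite hIic).2 fun j _ =>
      eventually_rel_incSeq _ (rep_le_rep hx hi j)).and
    (eventually_rel_incSeq _ (rep_le_rep hx n.le_succ prev))).exists

/-- The supremum of `x` is represented by a diagonal sequence whose `n`-th term dominates the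
terms `(rep x i) j` with `i, j ≤ n` and the previous diagonal term. -/
noncomputable def diagIndex : ℕ → ℕ
  | 0 => 1
  | n + 1 => (exists_diagIndex_succ hx n (diagIndex n)).choose

theorem rel_diagIndex : ∀ n, ∀ i ≤ n, ∀ j ≤ n,
    R.rel ((rep x i).1 j) ((rep x n).1 (diagIndex hx n))
  | 0, i, hi, j, hj => by
    obtain rfl : i = 0 := by omega
    obtain rfl : j = 0 := by omega
    exact (rep x 0).2 0
  | n + 1, _, hi, _, hj => (exists_diagIndex_succ hx n (diagIndex hx n)).choose_spec.1 _ hi _ hj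

noncomputable def diagSeq : R.incSeq :=
  ⟨fun n => (rep x n).1 (diagIndex hx n),
    fun n => (exists_diagIndex_succ hx n (diagIndex hx n)).choose_spec.2⟩

theorem isLUB_mk_diagSeq : IsLUB (range x) (mk (diagSeq hx)) := by
  refine isLUB_range_iff.2 ⟨fun k => ?_, fun b hb => ?_⟩
  · rw [← mk_rep x k]
    exact fun j => ⟨max k j, rel_diagIndex hx _ k (le_max_left _ _) j (le_max_right _ _)⟩
  · obtain ⟨β, rfl⟩ := mk_surjective b
    intro n
    have hn : rep x n ≤ β := by rw [← mk_le_mk, mk_rep]; exact hb n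
    obtain ⟨m, hm⟩ := hn (diagIndex hx n + 1)
    exact ⟨m, R.rel_trans ((rep x n).2 _) hm⟩

end Sup

theorem isLUB_mk_of_forall_rel {x : ℕ → R.Completion} {τ : R.incSeq}
    (hle : ∀ k, x k ≤ mk τ)
    (hrel : ∀ n, ∃ k σ, x k = mk σ ∧ ∃ m, R.rel (τ.1 n) (σ.1 m)) :
    IsLUB (range x) (mk τ) := by
  refine isLUB_range_iff.2 ⟨hle, fun b hb => ?_⟩
  obtain ⟨β, rfl⟩ := mk_surjective b
  intro n
  obtain ⟨k, σ, hσ, m, hm⟩ := hrel n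
  obtain ⟨j, hj⟩ := (hσ ▸ hb k : mk σ ≤ mk β) m
  exact ⟨j, R.rel_trans hm hj⟩

theorem mk_wayBelow_mk_of_rel {σ τ : R.incSeq} {m : ℕ} (h : ∀ k, R.rel (σ.1 k) (τ.1 m)) :
    WayBelow (mk σ) (mk τ) := by
  intro x hx a ha hτa
  obtain rfl := ha.unique (isLUB_mk_diagSeq hx)
  obtain ⟨n, hn⟩ := hτa m
  refine ⟨n, ?_⟩
  rw [← mk_rep x n]
  exact fun k => ⟨diagIndex hx n, R.rel_trans (h k) hn⟩

section Approx

variable (τ : R.incSeq)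

/-- Repeated interpolation: starts at `τ n` and stays `≺ τ (n + 1)`. -/
noncomputable def approxAux (n : ℕ) : ℕ → {p : P // R.rel p (τ.1 (n + 1))}
  | 0 => ⟨τ.1 n, τ.2 n⟩
  | k + 1 => ⟨(R.exists_between (approxAux n k).2).choose,
      (R.exists_between (approxAux n k).2).choose_spec.2⟩

noncomputable def approx (n : ℕ) : R.incSeq :=
  ⟨fun k => (approxAux τ n k).1,
    fun k => (R.exists_between (approxAux τ n k).2).choose_spec.1⟩

theorem approx_rel (n k : ℕ) : R.rel ((approx τ n).1 k) (τ.1 (n + 1)) := (approxAux τ n k).2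

theorem mk_approx_wayBelow (n : ℕ) : WayBelow (mk (approx τ n)) (mk (approx τ (n + 1))) :=
  mk_wayBelow_mk_of_rel (m := 1) fun k => R.rel_trans (approx_rel τ n k) ((approx τ (n + 1)).2 0)

theorem mk_approx_mono : Monotone fun n => mk (approx τ n) :=
  monotone_nat_of_le_succ fun n => (mk_approx_wayBelow τ n).le

theorem isLUB_mk_approx : IsLUB (range fun n => mk (approx τ n)) (mk τ) := by
  refine isLUB_range_iff.2 ⟨fun n k => ⟨n + 1, approx_rel τ n k⟩, fun b hb => ?_⟩
  obtain ⟨β, rfl⟩ := mk_surjective b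
  exact fun n => hb n 0

end Approx

theorem mk_wayBelow_mk_iff {σ τ : R.incSeq} :
    WayBelow (mk σ) (mk τ) ↔ ∃ m, ∀ k, R.rel (σ.1 k) (τ.1 m) := by
  refine ⟨fun h => ?_, fun ⟨m, hm⟩ => mk_wayBelow_mk_of_rel hm⟩
  obtain ⟨n, hn⟩ := h.exists_le (mk_approx_mono τ) (isLUB_mk_approx τ)
  refine ⟨n + 1, fun k => ?_⟩
  obtain ⟨j, hj⟩ := hn k
  exact R.rel_trans hj (approx_rel τ n j)

theorem isLUB_add {s t : ℕ → R.Completion} (hs : Monotone s) (ht : Monotone t) :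
    IsLUB (range fun n => s n + t n) (mk (diagSeq hs) + mk (diagSeq ht)) := by
  have hsup_s := isLUB_range_iff.1 (isLUB_mk_diagSeq hs)
  have hsup_t := isLUB_range_iff.1 (isLUB_mk_diagSeq ht)
  refine isLUB_range_iff.2 ⟨fun n => pomAxioms.add_le_add (hsup_s.1 n) (hsup_t.1 n),
    fun c hc => ?_⟩
  obtain ⟨γ, rfl⟩ := mk_surjective c
  intro n
  have hn : rep s n + rep t n ≤ γ := by rw [← mk_le_mk, mk_add, mk_rep, mk_rep]; exact hc n
  obtain ⟨m, hm⟩ := hn (max (diagIndex hs n) (diagIndex ht n) + 1)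
  exact ⟨m, R.rel_trans (R.add_rel_add (rel_incSeq_of_lt (rep s n) (by omega))
    (rel_incSeq_of_lt (rep t n) (by omega))) hm⟩

theorem cuAxioms : CuAxioms R.Completion where
  toPoMAxioms := pomAxioms
  O1 s hs := ⟨_, isLUB_mk_diagSeq hs⟩
  O2 := by
    rintro ⟨τ⟩
    exact ⟨fun n => mk (approx τ n), mk_approx_wayBelow τ, isLUB_mk_approx τ⟩
  O3 := by
    rintro ⟨σ'⟩ ⟨σ⟩ ⟨τ'⟩ ⟨τ⟩ h₁ h₂
    obtain ⟨m₁, hm₁⟩ := mk_wayBelow_mk_iff.1 h₁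
    obtain ⟨m₂, hm₂⟩ := mk_wayBelow_mk_iff.1 h₂
    exact mk_wayBelow_mk_of_rel (m := max m₁ m₂) fun k =>
      R.add_rel_add (rel_incSeq_of_le σ (hm₁ k) (le_max_left _ _))
        (rel_incSeq_of_le τ (hm₂ k) (le_max_right _ _))
  O4 s t hs ht a b ha hb := by
    rw [ha.unique (isLUB_mk_diagSeq hs), hb.unique (isLUB_mk_diagSeq ht)]
    exact isLUB_add hs ht


section Lift

theorem monotone_comp_incSeq {T : Type*} [Preorder T] {f : P → T}
    (hf : ∀ {a b}, R.rel a b → WayBelow (f a) (f b)) (σ : R.incSeq) :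
    Monotone fun n => f (σ.1 n) :=
  monotone_nat_of_le_succ fun n => (hf (σ.2 n)).le

variable {T : Type*} [AddCommMonoid T] [PartialOrder T] (cuT : CuAxioms T) {f : P → T}
  (hf : ∀ {a b}, R.rel a b → WayBelow (f a) (f b))
include hf

theorem seqSup_comp_le {σ τ : R.incSeq} (h : σ ≤ τ) :
    cuT.seqSup _ (monotone_comp_incSeq hf σ) ≤ cuT.seqSup _ (monotone_comp_incSeq hf τ) :=
  cuT.seqSup_le _ fun n =>
    let ⟨m, hm⟩ := h n
    (hf hm).le.trans (cuT.le_seqSup (fun n => f (τ.1 n)) m)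

noncomputable def lift : R.Completion → T :=
  Quotient.lift (fun σ => cuT.seqSup _ (monotone_comp_incSeq hf σ)) fun _ _ h =>
    le_antisymm (seqSup_comp_le cuT hf h.1) (seqSup_comp_le cuT hf h.2)

theorem isLUB_lift_mk (σ : R.incSeq) :
    IsLUB (range fun n => f (σ.1 n)) (lift cuT hf (mk σ)) :=
  cuT.isLUB_seqSup _ (monotone_comp_incSeq hf σ)

theorem le_lift_mk (σ : R.incSeq) (n : ℕ) : f (σ.1 n) ≤ lift cuT hf (mk σ) :=
  (isLUB_range_iff.1 (isLUB_lift_mk cuT hf σ)).1 n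

theorem lift_mk_le {σ : R.incSeq} {b : T} (h : ∀ n, f (σ.1 n) ≤ b) :
    lift cuT hf (mk σ) ≤ b :=
  (isLUB_range_iff.1 (isLUB_lift_mk cuT hf σ)).2 b h

theorem lift_mono : Monotone (lift cuT hf) := by
  rintro ⟨σ⟩ ⟨τ⟩ h
  exact seqSup_comp_le cuT hf h

theorem lift_wayBelow_lift {x y : R.Completion} (h : WayBelow x y) :
    WayBelow (lift cuT hf x) (lift cuT hf y) := by
  obtain ⟨σ, rfl⟩ := mk_surjective x
  obtain ⟨τ, rfl⟩ := mk_surjective y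
  obtain ⟨m, hm⟩ := mk_wayBelow_mk_iff.1 h
  exact (hf (τ.2 m)).mono (lift_mk_le cuT hf fun k => (hf (hm k)).le)
    (le_lift_mk cuT hf τ (m + 1))

theorem lift_isLUB {s : ℕ → R.Completion} (hs : Monotone s) {a : R.Completion}
    (ha : IsLUB (range s) a) : IsLUB (range fun n => lift cuT hf (s n)) (lift cuT hf a) := by
  obtain rfl := ha.unique (isLUB_mk_diagSeq hs)
  refine isLUB_range_iff.2 ⟨fun n => lift_mono cuT hf (ha.1 ⟨n, rfl⟩), fun c hc => ?_⟩
  refine lift_mk_le cuT hf fun n => le_trans ?_ (hc n)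
  rw [← mk_rep s n]
  exact le_lift_mk cuT hf (rep s n) _

theorem isCuHom_lift (hf0 : f 0 = 0) (hfadd : ∀ a b, f (a + b) = f a + f b) :
    IsCuHom (lift cuT hf) where
  map_zero := (isLUB_lift_mk cuT hf 0).unique <| by
    simpa only [ZeroMemClass.coe_zero, Pi.zero_apply, hf0] using isLUB_range_const (0 : T)
  map_add x y := by
    obtain ⟨σ, rfl⟩ := mk_surjective x
    obtain ⟨τ, rfl⟩ := mk_surjective y
    refine (isLUB_lift_mk cuT hf (σ + τ)).unique ?_
    simpa only [AddMemClass.coe_add, Pi.add_apply, hfadd] using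
      cuT.O4 _ _ (monotone_comp_incSeq hf σ) (monotone_comp_incSeq hf τ) _ _
        (isLUB_lift_mk cuT hf σ) (isLUB_lift_mk cuT hf τ)
  mono := lift_mono cuT hf
  map_wayBelow _ _ := lift_wayBelow_lift cuT hf
  map_seqSup _ hs _ := lift_isLUB cuT hf hs

end Lift

end Completion

end AbstractBasis

/-! ### Ideals and scales -/

section SupClosedLowerSet

variable {M : Type*} [Preorder M]

structure IsSupClosedLowerSet (A : Set M) : Prop where
  lower : ∀ x y, x ≤ y → y ∈ A → x ∈ A
  seqSup_mem : ∀ s : ℕ → M, Monotone s → (∀ n, s n ∈ A) →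
    ∀ a, IsLUB (range s) a → a ∈ A

theorem IsSupClosedLowerSet.iInter {ι : Sort*} {A : ι → Set M}
    (hA : ∀ i, IsSupClosedLowerSet (A i)) : IsSupClosedLowerSet (⋂ i, A i) where
  lower x y hxy hy := mem_iInter.2 fun i => (hA i).lower x y hxy (mem_iInter.1 hy i)
  seqSup_mem s hs h a ha :=
    mem_iInter.2 fun i => (hA i).seqSup_mem s hs (fun n => mem_iInter.1 (h n) i) a ha

end SupClosedLowerSet

section Ideal

variable {M N L : Type*} [AddCommMonoid M] [PartialOrder M] [AddCommMonoid N] [PartialOrder N]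
  [AddCommMonoid L] [PartialOrder L]

theorem IsScale.isSupClosedLowerSet {A : Set M} (hA : IsScale A) : IsSupClosedLowerSet A :=
  ⟨hA.lower, hA.seqSup_mem⟩

theorem IsSupClosedLowerSet.preimage {A : Set M} (hA : IsSupClosedLowerSet A) {f : N → M}
    (hf : IsCuHom f) : IsSupClosedLowerSet (f ⁻¹' A) where
  lower _ _ hxy hy := hA.lower _ _ (hf.mono hxy) hy
  seqSup_mem s hs h a ha := hA.seqSup_mem _ (hf.mono.comp hs) h _ (hf.map_seqSup s hs a ha)

theorem IsCuHom.comp {g : N → L} {f : M → N} (hg : IsCuHom g) (hf : IsCuHom f) :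
    IsCuHom (g ∘ f) where
  map_zero := by simp [hf.map_zero, hg.map_zero]
  map_add x y := by simp [hf.map_add, hg.map_add]
  mono := hg.mono.comp hf.mono
  map_wayBelow x y h := hg.map_wayBelow _ _ (hf.map_wayBelow x y h)
  map_seqSup s hs a ha := hg.map_seqSup _ (hf.mono.comp hs) _ (hf.map_seqSup s hs a ha)

theorem IsCuIdeal.preimage {f : N → M} (hf : IsCuHom f) {J : Set M} (hJ : IsCuIdeal J) :
    IsCuIdeal (f ⁻¹' J) where
  zero_mem := by simpa [Set.mem_preimage, hf.map_zero] using hJ.zero_mem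
  add_mem x y hx hy := by simpa [Set.mem_preimage, hf.map_add] using hJ.add_mem _ _ hx hy
  lower x y hxy hy := hJ.lower _ _ (hf.mono hxy) hy
  seqSup_mem s hs h a ha := hJ.seqSup_mem _ (hf.mono.comp hs) h _ (hf.map_seqSup s hs a ha)

theorem IsScale.preimage_eq_univ {A : Set N} (hA : IsScale A) {f : N → M} (hf : IsCuHom f)
    {J : Set M} (hJ : IsCuIdeal J) (hAJ : MapsTo f A J) : f ⁻¹' J = univ :=
  hA.generates _ (hJ.preimage hf) hAJ

theorem IsCuIdeal.sInter {𝒥 : Set (Set M)} (h : ∀ J ∈ 𝒥, IsCuIdeal J) :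
    IsCuIdeal (⋂₀ 𝒥) where
  zero_mem J hJ := (h J hJ).zero_mem
  add_mem x y hx hy J hJ := (h J hJ).add_mem x y (hx J hJ) (hy J hJ)
  lower x y hxy hy J hJ := (h J hJ).lower x y hxy (hy J hJ)
  seqSup_mem s hs hsJ a ha J hJ := (h J hJ).seqSup_mem s hs (fun n => hsJ n J hJ) a ha

def idealClosure (A : Set M) : Set M := ⋂₀ {J | IsCuIdeal J ∧ A ⊆ J}

theorem isCuIdeal_idealClosure (A : Set M) : IsCuIdeal (idealClosure A) :=
  IsCuIdeal.sInter fun _ hJ => hJ.1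

theorem subset_idealClosure (A : Set M) : A ⊆ idealClosure A :=
  fun _ hx _ hJ => hJ.2 hx

theorem idealClosure_subset {A J : Set M} (hJ : IsCuIdeal J) (hAJ : A ⊆ J) :
    idealClosure A ⊆ J :=
  fun _ hx => hx J ⟨hJ, hAJ⟩

def IsCuIdeal.toAddSubmonoid {J : Set M} (hJ : IsCuIdeal J) : AddSubmonoid M where
  carrier := J
  add_mem' := hJ.add_mem _ _
  zero_mem' := hJ.zero_mem

variable (cu : CuAxioms M) {J : Set M} (hJ : IsCuIdeal J)
include cu

theorem IsCuIdeal.isLUB_val_iff {s : ℕ → hJ.toAddSubmonoid} (hs : Monotone s)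
    {a : hJ.toAddSubmonoid} : IsLUB (range fun n => (s n).1) a.1 ↔ IsLUB (range s) a := by
  have of_val : ∀ {b : hJ.toAddSubmonoid}, IsLUB (range fun n => (s n).1) b.1 →
      IsLUB (range s) b := fun h => by
    rw [isLUB_range_iff] at h ⊢
    exact ⟨h.1, fun c hc => h.2 c.1 hc⟩
  refine ⟨of_val, fun ha => ?_⟩
  have hsup := cu.isLUB_seqSup _ (Subtype.mono_coe _ |>.comp hs)
  have hmem := hJ.seqSup_mem _ (Subtype.mono_coe _ |>.comp hs) (fun n => (s n).2) _ hsup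
  rwa [ha.unique (of_val (b := ⟨_, hmem⟩) hsup)]

theorem IsCuIdeal.wayBelow_val_iff {x y : hJ.toAddSubmonoid} :
    WayBelow x.1 y.1 ↔ WayBelow x y := by
  refine ⟨fun h s hs a ha hya => h _ (Subtype.mono_coe _ |>.comp hs) _
    ((hJ.isLUB_val_iff cu hs).2 ha) hya, fun h => ?_⟩
  let r : ℕ → hJ.toAddSubmonoid :=
    fun n => ⟨cu.rapidSeq y.1 n, hJ.lower _ _ (cu.rapidSeq_le _ n) y.2⟩
  obtain ⟨n, hn⟩ := h.exists_le (s := r) (fun _ _ hmn => cu.rapidSeq_mono _ hmn)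
    ((hJ.isLUB_val_iff cu fun _ _ hmn => cu.rapidSeq_mono _ hmn).1 (cu.isLUB_rapidSeq y.1))
  exact (cu.rapidSeq_wayBelow y.1 n).mono hn le_rfl

theorem IsCuIdeal.cuAxioms : CuAxioms hJ.toAddSubmonoid where
  add_le_add_left a b h c := cu.add_le_add_left a.1 b.1 h c.1
  zero_le a := cu.zero_le a.1
  O1 s hs := by
    have hmono : Monotone fun n => (s n).1 := Subtype.mono_coe _ |>.comp hs
    have hsup := cu.isLUB_seqSup _ hmono
    exact ⟨⟨_, hJ.seqSup_mem _ hmono (fun n => (s n).2) _ hsup⟩,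
      (hJ.isLUB_val_iff cu hs).1 hsup⟩
  O2 x := by
    let r : ℕ → hJ.toAddSubmonoid :=
      fun n => ⟨cu.rapidSeq x.1 n, hJ.lower _ _ (cu.rapidSeq_le _ n) x.2⟩
    refine ⟨r, fun n => (hJ.wayBelow_val_iff cu).1 (cu.rapidSeq_wayBelow_succ _ n), ?_⟩
    exact (hJ.isLUB_val_iff cu fun _ _ hmn => cu.rapidSeq_mono _ hmn).1 (cu.isLUB_rapidSeq x.1)
  O3 _ _ _ _ h₁ h₂ := (hJ.wayBelow_val_iff cu).1 <|
    cu.O3 _ _ _ _ ((hJ.wayBelow_val_iff cu).2 h₁) ((hJ.wayBelow_val_iff cu).2 h₂)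
  O4 s t hs ht a b ha hb := (hJ.isLUB_val_iff cu fun _ _ h => cu.add_le_add (hs h) (ht h)).1 <|
    cu.O4 _ _ (Subtype.mono_coe _ |>.comp hs) (Subtype.mono_coe _ |>.comp ht) _ _
      ((hJ.isLUB_val_iff cu hs).2 ha) ((hJ.isLUB_val_iff cu ht).2 hb)

theorem IsCuIdeal.isCuHom_val : IsCuHom (Subtype.val : hJ.toAddSubmonoid → M) where
  map_zero := rfl
  map_add _ _ := rfl
  mono := Subtype.mono_coe _
  map_wayBelow _ _ := (hJ.wayBelow_val_iff cu).2
  map_seqSup _ hs _ := (hJ.isLUB_val_iff cu hs).2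

theorem IsCuHom.codRestrict {f : N → M} (hf : IsCuHom f) (hfJ : ∀ x, f x ∈ J) :
    IsCuHom fun x => (⟨f x, hfJ x⟩ : hJ.toAddSubmonoid) where
  map_zero := Subtype.ext hf.map_zero
  map_add x y := Subtype.ext (hf.map_add x y)
  mono _ _ h := hf.mono h
  map_wayBelow x y h := (hJ.wayBelow_val_iff cu).1 (hf.map_wayBelow x y h)
  map_seqSup s hs a ha :=
    (hJ.isLUB_val_iff cu fun _ _ h => hf.mono (hs h)).1 (hf.map_seqSup s hs a ha)

theorem IsCuIdeal.image_val {K : Set hJ.toAddSubmonoid} (hK : IsCuIdeal K) :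
    IsCuIdeal (Subtype.val '' K) where
  zero_mem := ⟨0, hK.zero_mem, rfl⟩
  add_mem := by
    rintro _ _ ⟨x, hx, rfl⟩ ⟨y, hy, rfl⟩
    exact ⟨x + y, hK.add_mem x y hx hy, rfl⟩
  lower := by
    rintro x _ hxy ⟨y, hy, rfl⟩
    exact ⟨⟨x, hJ.lower _ _ hxy y.2⟩, hK.lower _ y hxy hy, rfl⟩
  seqSup_mem s hs hsK a ha := by
    choose t htK hts using hsK
    obtain rfl : (fun n => (t n).1) = s := funext hts
    exact ⟨⟨a, hJ.seqSup_mem _ hs (fun n => (t n).2) a ha⟩,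
      hK.seqSup_mem t hs htK _ ((hJ.isLUB_val_iff cu hs).1 ha), rfl⟩

theorem isScale_preimage_val_idealClosure {A : Set M} (hA : IsSupClosedLowerSet A) :
    IsScale (Subtype.val ⁻¹' A : Set (isCuIdeal_idealClosure A).toAddSubmonoid) where
  __ := hA.preimage ((isCuIdeal_idealClosure A).isCuHom_val cu)
  generates K hK hAK := by
    have hcl := idealClosure_subset ((isCuIdeal_idealClosure A).image_val cu hK) fun a ha =>
      ⟨⟨a, subset_idealClosure A ha⟩, hAK ha, rfl⟩
    refine eq_univ_of_forall fun x => ?_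
    obtain ⟨y, hy, hyx⟩ := hcl x.2
    exact Subtype.ext hyx ▸ hy

end Ideal

structure IsWayBelowLike {Q : Type*} [AddCommMonoid Q] (r : Q → Q → Prop) : Prop where
  trans : ∀ {a b c}, r a b → r b c → r a c
  zero_left : ∀ a, r 0 a
  add : ∀ {a b c d}, r a b → r c d → r (a + c) (b + d)

theorem CuAxioms.isWayBelowLike {M : Type*} [AddCommMonoid M] [PartialOrder M]
    (cu : CuAxioms M) : IsWayBelowLike (WayBelow : M → M → Prop) :=
  ⟨WayBelow.trans, cu.wayBelow_zero, fun h₁ h₂ => cu.O3 _ _ _ _ h₁ h₂⟩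

namespace IsWayBelowLike

variable {Q : Type*} [AddCommMonoid Q] {r : Q → Q → Prop} (hr : IsWayBelowLike r)

def treePaths : AddSubmonoid (TreeNode → Q) where
  carrier := {p | ∀ ⦃w w'⦄, Lt w w' → r (p w) (p w')}
  zero_mem' _ _ _ := hr.zero_left 0
  add_mem' hp hq _ _ h := hr.add (hp h) (hq h)

/-- Paths are compared through single nodes: `p ≺ q` when all of `p` lies below one value of
`q`. The density of the tree order provides interpolation. -/
def pathBasis : AbstractBasis hr.treePaths where
  rel p q := ∃ v, ∀ w, r (p.1 w) (q.1 v)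
  rel_trans := fun ⟨_, hv⟩ ⟨v', hv'⟩ => ⟨v', fun w => hr.trans (hv w) (hv' _)⟩
  zero_rel _ := ⟨[], fun _ => hr.zero_left _⟩
  add_rel_add {_ b _ d} := fun ⟨v, hv⟩ ⟨v', hv'⟩ => by
    have hlt : ∀ {u : TreeNode}, u.length ≤ max v.length v'.length →
        Lt u (spine (max v.length v'.length + 1)) := fun hu => lt_spine (by omega)
    exact ⟨_, fun w => hr.add (hr.trans (hv w) (b.2 (hlt (le_max_left _ _))))
      (hr.trans (hv' w) (d.2 (hlt (le_max_right _ _))))⟩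
  exists_between {_ b} := fun ⟨v, hv⟩ =>
    ⟨⟨fun s => b.1 (v ++ true :: false :: s), fun _ _ h => b.2 ((h.cons false).cons true
      |>.append_left v)⟩,
      ⟨[], fun w => hr.trans (hv w) (b.2 (lt_append_true v _))⟩,
      ⟨v ++ [true], fun s => b.2 (by simpa using ((Lt.false_nil s).cons true).append_left v)⟩⟩

end IsWayBelowLike

namespace CuAxioms

variable {M : Type*} [AddCommMonoid M] [PartialOrder M] (cu : CuAxioms M)

noncomputable def interpolant {x y : M} (h : WayBelow x y) : M :=
  (cu.exists_wayBelow_between h).choose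

theorem wayBelow_interpolant {x y : M} (h : WayBelow x y) : WayBelow x (cu.interpolant h) :=
  (cu.exists_wayBelow_between h).choose_spec.1

theorem interpolant_wayBelow {x y : M} (h : WayBelow x y) : WayBelow (cu.interpolant h) y :=
  (cu.exists_wayBelow_between h).choose_spec.2

/-- Iterated interpolation: a `≪`-increasing map from the tree to `{z | x ≪ z ∧ z ≪ y}`. -/
noncomputable def treeFill : {x y : M} → WayBelow x y → TreeNode → M
  | _, _, h, [] => cu.interpolant h
  | _, _, h, true :: r => treeFill (cu.interpolant_wayBelow h) r
  | _, _, h, false :: r => treeFill (cu.wayBelow_interpolant h) r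

theorem wayBelow_treeFill : ∀ {x y : M} (h : WayBelow x y) (w : TreeNode),
    WayBelow x (cu.treeFill h w)
  | _, _, h, [] => cu.wayBelow_interpolant h
  | _, _, h, true :: r => (cu.wayBelow_interpolant h).trans (wayBelow_treeFill _ r)
  | _, _, _, false :: r => wayBelow_treeFill _ r

theorem treeFill_wayBelow : ∀ {x y : M} (h : WayBelow x y) (w : TreeNode),
    WayBelow (cu.treeFill h w) y
  | _, _, h, [] => cu.interpolant_wayBelow h
  | _, _, _, true :: r => treeFill_wayBelow _ r
  | _, _, h, false :: r => (treeFill_wayBelow _ r).trans (cu.interpolant_wayBelow h)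

theorem treeFill_wayBelow_treeFill {w w' : TreeNode} (hw : Lt w w') {x y : M}
    (h : WayBelow x y) : WayBelow (cu.treeFill h w) (cu.treeFill h w') := by
  induction hw generalizing x y with
  | false_nil s => exact cu.treeFill_wayBelow _ s
  | nil_true t => exact cu.wayBelow_treeFill _ t
  | false_true s t => exact (cu.treeFill_wayBelow _ s).trans (cu.wayBelow_treeFill _ t)
  | cons b _ ih => cases b <;> exact ih _

/-- The spine node `1ᵏ` goes to `rapidSeq x (2k+1)`, and the left subtree hanging off it fills
the gap `rapidSeq x (2k) ≪ rapidSeq x (2k+1)`. -/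
noncomputable def belowPathFrom (x : M) : ℕ → TreeNode → M
  | k, [] => cu.rapidSeq x (2 * k + 1)
  | k, true :: r => belowPathFrom x (k + 1) r
  | k, false :: r => cu.treeFill (cu.rapidSeq_wayBelow_succ x (2 * k)) r

theorem rapidSeq_wayBelow_belowPathFrom (x : M) :
    ∀ (w : TreeNode) (k : ℕ), WayBelow (cu.rapidSeq x (2 * k)) (cu.belowPathFrom x k w)
  | [], k => cu.rapidSeq_wayBelow_succ x (2 * k)
  | true :: r, k => (cu.rapidSeq_wayBelow_of_lt x (by omega)).trans
      (rapidSeq_wayBelow_belowPathFrom x r (k + 1))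
  | false :: r, k => cu.wayBelow_treeFill _ r

theorem belowPathFrom_wayBelow (x : M) :
    ∀ (w : TreeNode) (k : ℕ), WayBelow (cu.belowPathFrom x k w) x
  | [], _ => cu.rapidSeq_wayBelow x _
  | true :: r, k => belowPathFrom_wayBelow x r (k + 1)
  | false :: r, _ => (cu.treeFill_wayBelow _ r).trans (cu.rapidSeq_wayBelow x _)

theorem belowPathFrom_wayBelow_belowPathFrom (x : M) {w w' : TreeNode} (hw : Lt w w') (k : ℕ) :
    WayBelow (cu.belowPathFrom x k w) (cu.belowPathFrom x k w') := by
  induction hw generalizing k with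
  | false_nil s => exact cu.treeFill_wayBelow _ s
  | nil_true t =>
    exact (cu.rapidSeq_wayBelow_of_lt x (by omega)).trans
      (cu.rapidSeq_wayBelow_belowPathFrom x t (k + 1))
  | false_true s t =>
    exact ((cu.treeFill_wayBelow _ s).trans (cu.rapidSeq_wayBelow_of_lt x (by omega))).trans
      (cu.rapidSeq_wayBelow_belowPathFrom x t (k + 1))
  | cons b hst ih =>
    cases b with
    | true => exact ih (k + 1)
    | false => exact cu.treeFill_wayBelow_treeFill hst _

theorem belowPathFrom_spine (x : M) (n k : ℕ) :
    cu.belowPathFrom x k (spine n) = cu.rapidSeq x (2 * (k + n) + 1) := by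
  induction n generalizing k with
  | zero => rfl
  | succ n ih =>
    rw [show k + (n + 1) = (k + 1) + n by omega, ← ih]
    rfl

/-- A `≪`-increasing map from the binary tree into `{z | z ≪ x}` whose values along the spine
have supremum `x`. -/
noncomputable def belowPath (x : M) : TreeNode → M := cu.belowPathFrom x 0

theorem belowPath_wayBelow_belowPath (x : M) {w w' : TreeNode} (hw : Lt w w') :
    WayBelow (cu.belowPath x w) (cu.belowPath x w') :=
  cu.belowPathFrom_wayBelow_belowPathFrom x hw 0

theorem belowPath_wayBelow (x : M) (w : TreeNode) : WayBelow (cu.belowPath x w) x :=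
  cu.belowPathFrom_wayBelow x w 0

theorem belowPath_le (x : M) (w : TreeNode) : cu.belowPath x w ≤ x :=
  (cu.belowPath_wayBelow x w).le

theorem belowPath_spine_mono (x : M) : Monotone fun n => cu.belowPath x (spine n) :=
  monotone_nat_of_le_succ fun n =>
    (cu.belowPath_wayBelow_belowPath x (spine_lt_spine n.lt_succ_self)).le

theorem isLUB_belowPath_spine (x : M) : IsLUB (range fun n => cu.belowPath x (spine n)) x := by
  refine isLUB_range_iff.2 ⟨fun n => cu.belowPath_le x (spine n), fun b hb => ?_⟩
  refine (isLUB_range_iff.1 (cu.isLUB_rapidSeq x)).2 b fun n => ?_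
  calc cu.rapidSeq x n ≤ cu.rapidSeq x (2 * (0 + n) + 1) := cu.rapidSeq_mono x (by omega)
    _ = cu.belowPath x (spine n) := (cu.belowPathFrom_spine x n 0).symm
    _ ≤ b := hb n

theorem exists_le_belowPath_spine {x y : M} (h : WayBelow x y) :
    ∃ n, x ≤ cu.belowPath y (spine n) :=
  h.exists_le (cu.belowPath_spine_mono y) (cu.isLUB_belowPath_spine y)

section SpineSup

variable (u : TreeNode → M)
  (hu : ∀ ⦃w w'⦄, Lt w w' → WayBelow (u w) (u w'))
include hu

omit [AddCommMonoid M] in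
theorem spine_mono : Monotone fun n => u (spine n) :=
  monotone_nat_of_le_succ fun n => (hu (spine_lt_spine n.lt_succ_self)).le

noncomputable def spineSup : M := cu.seqSup _ (spine_mono u hu)

theorem isLUB_spineSup : IsLUB (range fun n => u (spine n)) (cu.spineSup u hu) :=
  cu.isLUB_seqSup _ _

theorem spineSup_le {b : M} (h : ∀ n, u (spine n) ≤ b) : cu.spineSup u hu ≤ b :=
  (isLUB_range_iff.1 (cu.isLUB_spineSup u hu)).2 b h

theorem le_spineSup (w : TreeNode) : u w ≤ cu.spineSup u hu :=
  (hu (lt_spine w.length.lt_succ_self)).le.trans ((isLUB_range_iff.1 (cu.isLUB_spineSup u hu)).1 _)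

theorem spineSup_eq {a : M} (h : IsLUB (range fun n => u (spine n)) a) : cu.spineSup u hu = a :=
  (cu.isLUB_spineSup u hu).unique h

theorem spineSup_add (u' : TreeNode → M)
    (hu' : ∀ ⦃w w'⦄, Lt w w' → WayBelow (u' w) (u' w'))
    (hsum : ∀ ⦃w w'⦄, Lt w w' → WayBelow (u w + u' w) (u w' + u' w')) :
    cu.spineSup (fun w => u w + u' w) hsum = cu.spineSup u hu + cu.spineSup u' hu' :=
  cu.spineSup_eq _ hsum <| cu.O4 _ _ (spine_mono u hu) (spine_mono u' hu') _ _
    (cu.isLUB_spineSup u hu) (cu.isLUB_spineSup u' hu')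

theorem spine_wayBelow_spineSup (n : ℕ) : WayBelow (u (spine n)) (cu.spineSup u hu) :=
  (hu (spine_lt_spine n.lt_succ_self)).mono le_rfl (cu.le_spineSup u hu _)

end SpineSup

noncomputable def belowTreePath (x : M) : cu.isWayBelowLike.treePaths :=
  ⟨cu.belowPath x, fun _ _ h => cu.belowPath_wayBelow_belowPath x h⟩

theorem spineSup_belowTreePath (x : M) :
    cu.spineSup (cu.belowTreePath x).1 (cu.belowTreePath x).2 = x :=
  cu.spineSup_eq _ _ (cu.isLUB_belowPath_spine x)

end CuAxioms

namespace CuscCat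

open AbstractBasis
open Completion hiding mk

variable {I : Type u} [SmallCategory I]

/-! ### Limits -/

section Limit

variable (F : I ⥤ CuscCat.{u})

def compatFamilies : AddSubmonoid (∀ i, (F.obj i).carrier) where
  carrier := {x | ∀ ⦃i j⦄ (f : i ⟶ j), (F.map f).1 (x i) = x j}
  zero_mem' _ _ f := (F.map f).2.1.map_zero
  add_mem' {x y} hx hy _ _ f := by simp [(F.map f).2.1.map_add, hx f, hy f]

theorem isWayBelowLike_compatFamilies :
    IsWayBelowLike fun x y : compatFamilies F => ∀ i, WayBelow (x.1 i) (y.1 i) :=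
  ⟨fun h₁ h₂ i => (h₁ i).trans (h₂ i), fun _ i => (F.obj i).cu.wayBelow_zero _,
    fun h₁ h₂ i => (F.obj i).cu.O3 _ _ _ _ (h₁ i) (h₂ i)⟩

/-- Before cutting down to an ideal, the limit is the completion of the `≪`-paths of compatible
families, ordered pointwise. -/
abbrev limitBasis := (isWayBelowLike_compatFamilies F).pathBasis

abbrev PreLimit := (limitBasis F).Completion

variable {F}

theorem limitBasis_rel_of_forall_le {p q : (isWayBelowLike_compatFamilies F).treePaths}
    (v : TreeNode) (h : ∀ w i, (p.1 w).1 i ≤ (q.1 v).1 i) : (limitBasis F).rel p q :=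
  ⟨v ++ [true], fun w i => (q.2 (lt_append_true_nil v) i).mono (h w i) le_rfl⟩

variable (F)

noncomputable def evalSpine (i : I) (p : (isWayBelowLike_compatFamilies F).treePaths) :
    (F.obj i).carrier :=
  (F.obj i).cu.spineSup (fun w => (p.1 w).1 i) fun _ _ h => p.2 h i

variable {F}

section EvalSpine

variable (i : I) (p : (isWayBelowLike_compatFamilies F).treePaths)

theorem isLUB_evalSpine : IsLUB (range fun n => (p.1 (spine n)).1 i) (evalSpine F i p) :=
  (F.obj i).cu.isLUB_spineSup (fun w => (p.1 w).1 i) _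

theorem le_evalSpine (w : TreeNode) : (p.1 w).1 i ≤ evalSpine F i p :=
  (F.obj i).cu.le_spineSup (fun w => (p.1 w).1 i) _ w

theorem evalSpine_le {b : (F.obj i).carrier} (h : ∀ n, (p.1 (spine n)).1 i ≤ b) :
    evalSpine F i p ≤ b :=
  (F.obj i).cu.spineSup_le (fun w => (p.1 w).1 i) _ h

end EvalSpine

theorem evalSpine_wayBelow_evalSpine (i : I) {p q} (h : (limitBasis F).rel p q) :
    WayBelow (evalSpine F i p) (evalSpine F i q) := by
  obtain ⟨v, hv⟩ := h
  exact (q.2 (lt_append_true_nil v) i).mono (evalSpine_le i p fun n => (hv _ i).le)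
    (le_evalSpine i q _)

theorem map_evalSpine {i j : I} (η : i ⟶ j) (p : (isWayBelowLike_compatFamilies F).treePaths) :
    (F.map η).1 (evalSpine F i p) = evalSpine F j p := by
  refine ((isLUB_evalSpine j p).unique ?_).symm
  have := (F.map η).2.1.map_seqSup _ (CuAxioms.spine_mono _ fun _ _ h => p.2 h i) _
    (isLUB_evalSpine i p)
  simpa only [(p.1 _).2 η] using this

variable (F)

noncomputable def preProj (i : I) : PreLimit F → (F.obj i).carrier :=
  lift (F.obj i).cu (evalSpine_wayBelow_evalSpine i)

theorem isCuHom_preProj (i : I) : IsCuHom (preProj F i) :=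
  isCuHom_lift _ _ ((F.obj i).cu.spineSup_eq _ _ (by simp))
    fun _ _ => (F.obj i).cu.spineSup_add _ _ _ _ _

variable {F}

theorem isLUB_preProj_mk (i : I) (σ : (limitBasis F).incSeq) :
    IsLUB (range fun n => evalSpine F i (σ.1 n)) (preProj F i (Completion.mk σ)) :=
  isLUB_lift_mk (F.obj i).cu (evalSpine_wayBelow_evalSpine i) σ

theorem val_le_preProj_mk (i : I) (σ : (limitBasis F).incSeq) (n : ℕ) (w : TreeNode) :
    ((σ.1 n).1 w).1 i ≤ preProj F i (Completion.mk σ) :=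
  (le_evalSpine i _ w).trans (le_lift_mk _ _ σ n)

theorem map_preProj {i j : I} (η : i ⟶ j) (x : PreLimit F) :
    (F.map η).1 (preProj F i x) = preProj F j x := by
  obtain ⟨σ, rfl⟩ := mk_surjective x
  refine ((isLUB_preProj_mk j σ).unique ?_).symm
  simpa only [map_evalSpine] using (F.map η).2.1.map_seqSup _
    (monotone_comp_incSeq (evalSpine_wayBelow_evalSpine i) σ) _ (isLUB_preProj_mk i σ)

theorem exists_preProj_le_of_wayBelow {x : PreLimit F} {τ : (limitBasis F).incSeq}
    (h : WayBelow x (Completion.mk τ)) : ∃ m v, ∀ i, preProj F i x ≤ ((τ.1 m).1 v).1 i := by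
  obtain ⟨σ, rfl⟩ := mk_surjective x
  obtain ⟨m, hm⟩ := mk_wayBelow_mk_iff.1 h
  obtain ⟨v, hv⟩ := τ.2 m
  refine ⟨m + 1, v, fun i => lift_mk_le _ _ fun k => evalSpine_le i _ fun n => ?_⟩
  obtain ⟨vk, hvk⟩ := hm k
  exact ((hvk _ i).trans (hv vk i)).le

variable (F)

def preLimitScale : Set (PreLimit F) := ⋂ i, preProj F i ⁻¹' (F.obj i).scale

abbrev limitIdeal : IsCuIdeal (idealClosure (preLimitScale F)) := isCuIdeal_idealClosure _

noncomputable def limit : CuscCat.{u} where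
  carrier := (limitIdeal F).toAddSubmonoid
  cu := (limitIdeal F).cuAxioms cuAxioms
  scale := Subtype.val ⁻¹' preLimitScale F
  isScale := isScale_preimage_val_idealClosure cuAxioms <| IsSupClosedLowerSet.iInter fun i =>
    (F.obj i).isScale.isSupClosedLowerSet.preimage (isCuHom_preProj F i)

noncomputable def limitCone : Limits.Cone F where
  pt := limit F
  π.app i := ⟨preProj F i ∘ Subtype.val,
    (isCuHom_preProj F i).comp ((limitIdeal F).isCuHom_val cuAxioms),
    fun _ hx => mem_iInter.1 hx i⟩
  π.naturality _ _ η := Subtype.ext (funext fun x => (map_preProj η x.1).symm)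

section Lift

variable {F} (c : Limits.Cone F)

theorem cone_map_app {i j : I} (η : i ⟶ j) (t : c.pt.carrier) :
    (F.map η).1 ((c.π.app i).1 t) = (c.π.app j).1 t :=
  congrArg (fun f => f.1 t) (c.w η)

def coneFamily (t : c.pt.carrier) : compatFamilies F :=
  ⟨fun i => (c.π.app i).1 t, fun _ _ η => cone_map_app c η t⟩

@[simp] theorem coneFamily_apply (t : c.pt.carrier) (i : I) :
    (coneFamily c t).1 i = (c.π.app i).1 t := rfl

abbrev conePaths := c.pt.cu.isWayBelowLike.treePaths

variable {c}

theorem coneFamily_le_coneFamily {t t' : c.pt.carrier} (h : t ≤ t') (i : I) :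
    (coneFamily c t).1 i ≤ (coneFamily c t').1 i :=
  (c.π.app i).2.1.mono h

variable (c)

/-- The `n`-th term is the family-valued path read off the left subtree at the spine node `1ⁿ`. -/
noncomputable def spineSeq (u : conePaths c) : (limitBasis F).incSeq :=
  ⟨fun n => ⟨fun s => coneFamily c (u.1 (spine n ++ false :: s)),
      fun _ _ h i => (c.π.app i).2.1.map_wayBelow _ _ (u.2 ((h.cons false).append_left _))⟩,
    fun n => limitBasis_rel_of_forall_le [] fun _ => coneFamily_le_coneFamily
      (u.2 (append_false_lt_spine_append (by simp) _ _)).le⟩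

variable {c}

@[simp] theorem spineSeq_apply (u : conePaths c) (n : ℕ) (s : TreeNode) :
    ((spineSeq c u).1 n).1 s = coneFamily c (u.1 (spine n ++ false :: s)) := rfl

theorem rel_spineSeq_of_le {u u' : conePaths c} {n m : ℕ} (h : u.1 (spine n) ≤ u'.1 (spine m)) :
    (limitBasis F).rel ((spineSeq c u).1 n) ((spineSeq c u').1 (m + 1)) :=
  limitBasis_rel_of_forall_le [] fun w => coneFamily_le_coneFamily <|
    ((u.2 (append_false_lt (spine n) w)).le.trans h).trans
      (u'.2 (lt_spine_append (n := m + 1) (by simp) [false])).le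

theorem mk_spineSeq_le_mk_spineSeq {u u' : conePaths c}
    (h : c.pt.cu.spineSup u.1 u.2 ≤ c.pt.cu.spineSup u'.1 u'.2) :
    Completion.mk (spineSeq c u) ≤ Completion.mk (spineSeq c u') := fun n => by
  obtain ⟨m, hm⟩ := ((c.pt.cu.spine_wayBelow_spineSup _ u.2 n).mono le_rfl h).exists_le
    (CuAxioms.spine_mono _ u'.2) (c.pt.cu.isLUB_spineSup _ _)
  exact ⟨m + 1, rel_spineSeq_of_le hm⟩

theorem spineSeq_zero : spineSeq c 0 = 0 :=
  Subtype.ext <| funext fun _ => Subtype.ext <| funext fun _ => Subtype.ext <| funext fun i => by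
    simp [(c.π.app i).2.1.map_zero]

theorem spineSeq_add (u u' : conePaths c) : spineSeq c (u + u') = spineSeq c u + spineSeq c u' :=
  Subtype.ext <| funext fun _ => Subtype.ext <| funext fun _ => Subtype.ext <| funext fun i => by
    simp [(c.π.app i).2.1.map_add]

theorem preProj_mk_spineSeq (i : I) (u : conePaths c) :
    preProj F i (Completion.mk (spineSeq c u)) = (c.π.app i).1 (c.pt.cu.spineSup u.1 u.2) := by
  have hleg := (c.π.app i).2.1
  refine le_antisymm (lift_mk_le _ _ fun n => evalSpine_le i _ fun k =>
    hleg.mono (c.pt.cu.le_spineSup u.1 u.2 (spine n ++ false :: spine k))) ?_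
  refine (isLUB_range_iff.1 (hleg.map_seqSup _ (CuAxioms.spine_mono _ u.2) _
    (c.pt.cu.isLUB_spineSup _ u.2))).2 _ fun m => ?_
  exact (hleg.mono (u.2 (lt_spine_append (n := m + 1) (by simp) [false])).le).trans
    (val_le_preProj_mk i (spineSeq c u) (m + 1) [])

variable (c)

noncomputable def preLift (t : c.pt.carrier) : PreLimit F :=
  Completion.mk (spineSeq c (c.pt.cu.belowTreePath t))

variable {c}

theorem preProj_preLift (i : I) (t : c.pt.carrier) : preProj F i (preLift c t) = (c.π.app i).1 t :=
  (preProj_mk_spineSeq i _).trans (congrArg _ (c.pt.cu.spineSup_belowTreePath t))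

theorem preLift_eq_mk_spineSeq {t : c.pt.carrier} {u : conePaths c}
    (h : c.pt.cu.spineSup u.1 u.2 = t) : preLift c t = Completion.mk (spineSeq c u) := by
  have ht := c.pt.cu.spineSup_belowTreePath t
  exact le_antisymm (mk_spineSeq_le_mk_spineSeq (ht.trans h.symm).le)
    (mk_spineSeq_le_mk_spineSeq (h.trans ht.symm).le)

theorem preLift_mono : Monotone (preLift c) := fun t t' h =>
  mk_spineSeq_le_mk_spineSeq <| by
    rwa [c.pt.cu.spineSup_belowTreePath, c.pt.cu.spineSup_belowTreePath]

theorem preLift_isLUB {s : ℕ → c.pt.carrier} (hs : Monotone s) {t : c.pt.carrier}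
    (ht : IsLUB (range s) t) : IsLUB (range fun k => preLift c (s k)) (preLift c t) := by
  refine isLUB_mk_of_forall_rel (fun k => preLift_mono (ht.1 ⟨k, rfl⟩)) fun n => ?_
  obtain ⟨k, hk⟩ := (c.pt.cu.belowPath_wayBelow t (spine (n + 1))).exists_le hs ht
  obtain ⟨m, hm⟩ := c.pt.cu.exists_le_belowPath_spine
    ((c.pt.cu.belowPath_wayBelow_belowPath t (spine_lt_spine n.lt_succ_self)).mono le_rfl hk)
  exact ⟨k, _, rfl, m + 1, rel_spineSeq_of_le (u' := c.pt.cu.belowTreePath (s k)) hm⟩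

theorem isCuHom_preLift : IsCuHom (preLift c) where
  map_zero := by
    rw [preLift_eq_mk_spineSeq (u := 0) (c.pt.cu.spineSup_eq _ _ (by simp)), spineSeq_zero]
    rfl
  map_add t t' := by
    rw [preLift_eq_mk_spineSeq (u := c.pt.cu.belowTreePath t + c.pt.cu.belowTreePath t')
      ((c.pt.cu.spineSup_add _ (c.pt.cu.belowTreePath t).2 _ (c.pt.cu.belowTreePath t').2 _).trans
        (congrArg₂ (· + ·) (c.pt.cu.spineSup_belowTreePath t)
          (c.pt.cu.spineSup_belowTreePath t'))),
      spineSeq_add]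
    rfl
  mono := preLift_mono
  map_wayBelow t t₂ h := by
    obtain ⟨m, hm⟩ := c.pt.cu.exists_le_belowPath_spine h
    exact mk_wayBelow_mk_of_rel (m := m + 1) fun n =>
      rel_spineSeq_of_le ((c.pt.cu.belowPath_le t _).trans hm)
  map_seqSup _ hs _ := preLift_isLUB hs

theorem preLift_mem_preLimitScale {t : c.pt.carrier} (ht : t ∈ c.pt.scale) :
    preLift c t ∈ preLimitScale F :=
  mem_iInter.2 fun i => by
    rw [mem_preimage, preProj_preLift]
    exact (c.π.app i).2.2 t ht

theorem preLift_mem_limitIdeal (t : c.pt.carrier) :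
    preLift c t ∈ idealClosure (preLimitScale F) := by
  have := c.pt.isScale.preimage_eq_univ isCuHom_preLift (limitIdeal F) fun _ hθ =>
    subset_idealClosure _ (preLift_mem_preLimitScale hθ)
  exact (eq_univ_iff_forall.1 this t :)

theorem mk_le_preLift_of_preProj_le {τ : (limitBasis F).incSeq} {t : c.pt.carrier} {m : ℕ}
    (h : ∀ i, preProj F i (Completion.mk τ) ≤ (c.π.app i).1 (c.pt.cu.belowPath t (spine m))) :
    Completion.mk τ ≤ preLift c t := fun j =>
  ⟨m + 1, limitBasis_rel_of_forall_le [] fun w i => (val_le_preProj_mk i τ j w).trans <|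
    (h i).trans <| (c.π.app i).2.1.mono <|
      (c.pt.cu.belowPath_wayBelow_belowPath t
        (lt_spine_append (n := m + 1) (by simp) [false])).le⟩

section Unique

variable {k : c.pt.carrier → PreLimit F} (hk : IsCuHom k)
  (hkc : ∀ i t, preProj F i (k t) = (c.π.app i).1 t)
include hk hkc

theorem le_preLift (t : c.pt.carrier) : k t ≤ preLift c t := by
  have hlub := hk.map_seqSup _ (c.pt.cu.belowPath_spine_mono t) t
    (c.pt.cu.isLUB_belowPath_spine t)
  refine (isLUB_range_iff.1 hlub).2 _ fun m => ?_
  obtain ⟨τ, hτ⟩ := mk_surjective (k (c.pt.cu.belowPath t (spine m)))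
  rw [← hτ]
  exact mk_le_preLift_of_preProj_le fun i => (hτ ▸ hkc i _).le

theorem preLift_le (t : c.pt.carrier) : preLift c t ≤ k t := by
  obtain ⟨τ, hτ⟩ := mk_surjective (k t)
  rw [← hτ]
  intro n
  obtain ⟨m, v, hv⟩ := exists_preProj_le_of_wayBelow
    (hτ ▸ hk.map_wayBelow _ _ (c.pt.cu.belowPath_wayBelow t (spine n)))
  refine ⟨m, limitBasis_rel_of_forall_le v fun w i => ?_⟩
  exact ((c.π.app i).2.1.mono (c.pt.cu.belowPath_wayBelow_belowPath t
    (append_false_lt _ w)).le).trans ((hkc i _).symm.le.trans (hv i))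

theorem preLift_unique : k = preLift c :=
  funext fun t => le_antisymm (le_preLift hk hkc t) (preLift_le hk hkc t)

end Unique

variable (c)

noncomputable def limitLift : c.pt ⟶ limit F :=
  ⟨fun t => ⟨preLift c t, preLift_mem_limitIdeal t⟩,
    isCuHom_preLift.codRestrict cuAxioms (limitIdeal F) preLift_mem_limitIdeal,
    fun _ => preLift_mem_preLimitScale⟩

end Lift

noncomputable def limitConeIsLimit : Limits.IsLimit (limitCone F) where
  lift := limitLift
  fac c i := Subtype.ext (funext fun t => preProj_preLift (c := c) i t)
  uniq _ m hm := Subtype.ext <| funext fun t => Subtype.ext <| congrFun (preLift_unique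
    (((limitIdeal F).isCuHom_val cuAxioms).comp m.2.1)
    fun i t => congrArg (fun f => f.1 t) (hm i)) t

theorem hasLimit : Limits.HasLimit F := ⟨⟨⟨limitCone F, limitConeIsLimit F⟩⟩⟩

end Limit

/-! ### Colimits -/

section Colimit

variable (F : I ⥤ CuscCat.{u})

structure CuCocone : Type (u + 1) where
  pt : Type u
  [addCommMonoid : AddCommMonoid pt]
  [partialOrder : PartialOrder pt]
  cu : CuAxioms pt
  leg : ∀ i, (F.obj i).carrier → pt
  isCuHom_leg : ∀ i, IsCuHom (leg i)
  leg_map : ∀ ⦃i j⦄ (η : i ⟶ j) (x : (F.obj i).carrier), leg j ((F.map η).1 x) = leg i x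

attribute [instance] CuCocone.addCommMonoid CuCocone.partialOrder

abbrev ColoredPath : Type u := Σ i, ((F.obj i).cu.isWayBelowLike.treePaths)

abbrev FormalSum : Type u := Multiset (ColoredPath F)

namespace ColoredPath

variable {F} (z : ColoredPath F)

noncomputable def value : (F.obj z.1).carrier := (F.obj z.1).cu.spineSup z.2.1 z.2.2

/-- The restriction of a path to the left subtree below the node `w`. -/
def cut (w : TreeNode) : ColoredPath F :=
  ⟨z.1, fun s => z.2.1 (w ++ false :: s), fun _ _ h => z.2.2 ((h.cons false).append_left w)⟩

theorem le_value (w : TreeNode) : z.2.1 w ≤ z.value := (F.obj z.1).cu.le_spineSup _ z.2.2 w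

/-- `(z.cut w).value`, typed in `F.obj z.1` rather than in `F.obj (z.cut w).1`. -/
noncomputable def cutValue (w : TreeNode) : (F.obj z.1).carrier := (z.cut w).value

theorem cutValue_le (w : TreeNode) : z.cutValue w ≤ z.2.1 w :=
  (F.obj z.1).cu.spineSup_le (z.cut w).2.1 (z.cut w).2.2 fun _ => (z.2.2 (append_false_lt w _)).le

theorem le_cutValue (w : TreeNode) : z.2.1 (w ++ [false]) ≤ z.cutValue w := (z.cut w).le_value []

theorem cutValue_wayBelow (w : TreeNode) : WayBelow (z.cutValue w) z.value :=
  (z.2.2 (lt_append_true_nil w)).mono (z.cutValue_le w) (z.le_value _)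

theorem cutValue_le_cutValue {w w' : TreeNode} (h : Lt w (w' ++ [false])) :
    z.cutValue w ≤ z.cutValue w' :=
  (z.cutValue_le w).trans ((z.2.2 h).le.trans (z.le_cutValue w'))

theorem isLUB_cutValue_spine : IsLUB (range fun n => z.cutValue (spine n)) z.value := by
  refine isLUB_range_iff.2 ⟨fun n => (z.cutValue_le _).trans (z.le_value _), fun b hb => ?_⟩
  exact (F.obj z.1).cu.spineSup_le _ _ fun n =>
    ((z.2.2 (lt_spine_append (n := n + 1) (by simp) [false])).le.trans (z.le_cutValue _)).trans
      (hb (n + 1))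

theorem cutValue_spine_mono : Monotone fun n => z.cutValue (spine n) :=
  monotone_nat_of_le_succ fun n =>
    z.cutValue_le_cutValue (lt_spine_append (n := n + 1) (by simp) [false])

theorem cutValue_add {i : I} (p q : (F.obj i).cu.isWayBelowLike.treePaths) (w : TreeNode) :
    cutValue (F := F) ⟨i, p + q⟩ w = cutValue ⟨i, p⟩ w + cutValue ⟨i, q⟩ w :=
  (F.obj i).cu.spineSup_add _ (cut (F := F) ⟨i, p⟩ w).2.2 _ (cut (F := F) ⟨i, q⟩ w).2.2
    (cut (F := F) ⟨i, p + q⟩ w).2.2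

theorem cut_cut (v w : TreeNode) : (z.cut w).cut v = z.cut (w ++ false :: v) :=
  Sigma.ext rfl <| heq_of_eq <| Subtype.ext <| funext fun _ => by simp [cut]

end ColoredPath

namespace FormalSum

variable {F}

def cut (w : TreeNode) (c : FormalSum F) : FormalSum F := c.map (·.cut w)

@[simp] theorem cut_add (w : TreeNode) (c d : FormalSum F) : (c + d).cut w = c.cut w + d.cut w :=
  Multiset.map_add _ _ _

@[simp] theorem cut_zero (w : TreeNode) : (0 : FormalSum F).cut w = 0 := rfl

@[simp] theorem cut_singleton (w : TreeNode) (z : ColoredPath F) :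
    ({z} : FormalSum F).cut w = {z.cut w} :=
  Multiset.map_singleton _ _

theorem cut_cut (v w : TreeNode) (c : FormalSum F) : (c.cut w).cut v = c.cut (w ++ false :: v) := by
  simp only [cut, Multiset.map_map, Function.comp_def, ColoredPath.cut_cut]

end FormalSum

namespace CuCocone

variable {F} (co : CuCocone F)

noncomputable def eval (c : FormalSum F) : co.pt := (c.map fun z => co.leg z.1 z.value).sum

@[simp] theorem eval_add (c d : FormalSum F) : co.eval (c + d) = co.eval c + co.eval d := by
  simp [eval]

@[simp] theorem eval_zero : co.eval 0 = 0 := rfl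

@[simp] theorem eval_singleton (z : ColoredPath F) : co.eval {z} = co.leg z.1 z.value := by
  simp [eval]

theorem eval_cut_singleton (w : TreeNode) (z : ColoredPath F) :
    co.eval (({z} : FormalSum F).cut w) = co.leg z.1 (z.cutValue w) := by
  rw [FormalSum.cut_singleton, eval_singleton]
  rfl

theorem eval_cut_le_eval_cut {w w' : TreeNode} (h : Lt w (w' ++ [false])) (c : FormalSum F) :
    co.eval (c.cut w) ≤ co.eval (c.cut w') := by
  simp only [eval, FormalSum.cut, Multiset.map_map, Function.comp_def]
  exact co.cu.multiset_sum_map_le c fun z _ => (co.isCuHom_leg z.1).mono (z.cutValue_le_cutValue h)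

theorem eval_cut_wayBelow (w : TreeNode) (c : FormalSum F) :
    WayBelow (co.eval (c.cut w)) (co.eval c) := by
  simp only [eval, FormalSum.cut, Multiset.map_map, Function.comp_def]
  exact co.cu.multiset_sum_map_wayBelow c fun z _ =>
    (co.isCuHom_leg z.1).map_wayBelow _ _ (z.cutValue_wayBelow w)

theorem eval_cut_le (w : TreeNode) (c : FormalSum F) : co.eval (c.cut w) ≤ co.eval c :=
  (co.eval_cut_wayBelow w c).le

end CuCocone

namespace FormalSum

variable {F}

def CoconeLE (c d : FormalSum F) : Prop := ∀ co : CuCocone F, co.eval c ≤ co.eval d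

end FormalSum

open FormalSum

def colimitBasis : AbstractBasis (FormalSum F) where
  rel c d := ∃ w, CoconeLE c (d.cut w)
  rel_trans {_ b _} := fun ⟨w, hw⟩ ⟨w', hw'⟩ =>
    ⟨w', fun co => (hw co).trans ((co.eval_cut_le w b).trans (hw' co))⟩
  zero_rel _ := ⟨[], fun co => co.cu.zero_le _⟩
  add_rel_add {_ b _ d} := fun ⟨w, hw⟩ ⟨w', hw'⟩ => by
    have hlt : ∀ {v : TreeNode}, v.length ≤ max w.length w'.length →
        Lt v (spine (max w.length w'.length + 1) ++ [false]) :=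
      fun hv => lt_spine_append (by omega) _
    refine ⟨spine (max w.length w'.length + 1), fun co => ?_⟩
    rw [cut_add, co.eval_add, co.eval_add]
    exact co.cu.add_le_add ((hw co).trans (co.eval_cut_le_eval_cut (hlt (le_max_left _ _)) b))
      ((hw' co).trans (co.eval_cut_le_eval_cut (hlt (le_max_right _ _)) d))
  exists_between {_ b} := fun ⟨w, hw⟩ =>
    ⟨b.cut (w ++ [true]),
      ⟨[], fun co => (hw co).trans <| by
        rw [cut_cut]
        exact co.eval_cut_le_eval_cut (by simpa using lt_append_true w [false, false]) b⟩,
      ⟨w ++ [true, true], fun co => co.eval_cut_le_eval_cut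
        (by simpa using lt_append_true (w ++ [true]) [false]) b⟩⟩


abbrev ColimitCarrier := (colimitBasis F).Completion

variable {F}

theorem rel_cut_of_coconeLE_cut {c d : FormalSum F} {w : TreeNode} (h : CoconeLE c (d.cut w)) :
    (colimitBasis F).rel c (d.cut (spine (w.length + 1))) :=
  have hlt : Lt w (spine (w.length + 1) ++ false :: [] ++ [false]) := by
    simpa using lt_spine_append (n := w.length + 1) (by omega) [false, false]
  ⟨[], fun co => (h co).trans <| by
    rw [cut_cut]
    exact co.eval_cut_le_eval_cut hlt d⟩

/-- The cuts of `c` below the spine nodes `1ⁿ`: a `≺`-increasing sequence whose class is the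
image of `c` in the colimit. -/
def cutSeq (c : FormalSum F) : (colimitBasis F).incSeq :=
  ⟨fun n => c.cut (spine n), fun n => by
    simpa using rel_cut_of_coconeLE_cut (d := c) (w := spine n) fun _ => le_rfl⟩

theorem cutSeq_add (c d : FormalSum F) : cutSeq (c + d) = cutSeq c + cutSeq d :=
  Subtype.ext <| funext fun _ => cut_add _ c d

theorem rel_cutSeq_of_coconeLE {c d : FormalSum F} {n m : ℕ}
    (h : CoconeLE (c.cut (spine n)) (d.cut (spine m))) :
    (colimitBasis F).rel ((cutSeq c).1 n) ((cutSeq d).1 (m + 1)) :=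
  (by simpa using rel_cut_of_coconeLE_cut h :
    (colimitBasis F).rel (c.cut (spine n)) (d.cut (spine (m + 1))))

theorem mk_cutSeq_le_mk_cutSeq {c d : FormalSum F}
    (h : ∀ n, ∃ m, CoconeLE (c.cut (spine n)) (d.cut (spine m))) :
    Completion.mk (cutSeq c) ≤ Completion.mk (cutSeq d) := fun n =>
  let ⟨m, hm⟩ := h n
  ⟨m + 1, rel_cutSeq_of_coconeLE hm⟩

theorem coconeLE_cut_singleton {z z' : ColoredPath F} {n m : ℕ}
    (h : ∀ co : CuCocone F, co.leg z.1 (z.2.1 (spine n)) ≤ co.leg z'.1 (z'.2.1 (spine m))) :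
    CoconeLE (({z} : FormalSum F).cut (spine n)) (({z'} : FormalSum F).cut (spine (m + 1))) :=
  fun co => by
    rw [co.eval_cut_singleton, co.eval_cut_singleton]
    exact ((co.isCuHom_leg _).mono (z.cutValue_le _)).trans <| (h co).trans <|
      (co.isCuHom_leg _).mono <| (z'.2.2 (lt_spine_append (n := m + 1) (by simp) [false])).le.trans
        (z'.le_cutValue _)

theorem mk_cutSeq_singleton_le {z z' : ColoredPath F}
    (h : ∀ n, ∃ m, ∀ co : CuCocone F,
      co.leg z.1 (z.2.1 (spine n)) ≤ co.leg z'.1 (z'.2.1 (spine m))) :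
    Completion.mk (cutSeq {z}) ≤ Completion.mk (cutSeq {z'}) :=
  mk_cutSeq_le_mk_cutSeq fun n =>
    let ⟨m, hm⟩ := h n
    ⟨m + 1, coconeLE_cut_singleton hm⟩

theorem mk_cutSeq_singleton_le_of_value_le {i : I} {p q : (F.obj i).cu.isWayBelowLike.treePaths}
    (h : ColoredPath.value (F := F) ⟨i, p⟩ ≤ ColoredPath.value (F := F) ⟨i, q⟩) :
    Completion.mk (cutSeq {⟨i, p⟩}) ≤ Completion.mk (cutSeq {⟨i, q⟩}) :=
  mk_cutSeq_singleton_le fun n => by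
    obtain ⟨m, hm⟩ := (((F.obj i).cu.spine_wayBelow_spineSup _ p.2 n).mono le_rfl h).exists_le
      (CuAxioms.spine_mono _ q.2) ((F.obj i).cu.isLUB_spineSup _ q.2)
    exact ⟨m, fun co => (co.isCuHom_leg i).mono hm⟩

variable (F)

noncomputable def belowColoredPath (i : I) (x : (F.obj i).carrier) : ColoredPath F :=
  ⟨i, (F.obj i).cu.belowTreePath x⟩

noncomputable def colimitLeg (i : I) (x : (F.obj i).carrier) : ColimitCarrier F :=
  Completion.mk (cutSeq {belowColoredPath F i x})

variable {F}

theorem value_belowColoredPath (i : I) (x : (F.obj i).carrier) :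
    (belowColoredPath F i x).value = x :=
  (F.obj i).cu.spineSup_belowTreePath x

theorem mk_cutSeq_singleton (z : ColoredPath F) :
    Completion.mk (cutSeq {z}) = colimitLeg F z.1 z.value := by
  obtain ⟨i, p⟩ := z
  have h := value_belowColoredPath (F := F) i (ColoredPath.value ⟨i, p⟩)
  exact le_antisymm (mk_cutSeq_singleton_le_of_value_le h.ge)
    (mk_cutSeq_singleton_le_of_value_le h.le)

theorem colimitLeg_mono (i : I) : Monotone (colimitLeg F i) := fun x y h =>
  mk_cutSeq_singleton_le_of_value_le <|
    (value_belowColoredPath i x).trans_le (h.trans_eq (value_belowColoredPath i y).symm)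

theorem colimitLeg_zero (i : I) : colimitLeg F i 0 = 0 := by
  refine le_antisymm (mk_cutSeq_le_mk_cutSeq (d := 0) fun n => ⟨0, fun co => ?_⟩)
    (cuAxioms.zero_le _)
  rw [co.eval_cut_singleton, cut_zero, co.eval_zero, ← (co.isCuHom_leg i).map_zero]
  exact (co.isCuHom_leg i).mono (((belowColoredPath F i 0).cutValue_le _).trans
    ((F.obj i).cu.belowPath_le 0 _))

theorem mk_cutSeq_singleton_add {i : I} (p q : (F.obj i).cu.isWayBelowLike.treePaths) :
    Completion.mk (cutSeq {(⟨i, p + q⟩ : ColoredPath F)}) =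
      Completion.mk (cutSeq {⟨i, p⟩}) + Completion.mk (cutSeq {⟨i, q⟩}) := by
  have heval : ∀ (co : CuCocone F) (n : ℕ),
      co.eval (({⟨i, p + q⟩} : FormalSum F).cut (spine n)) =
      co.eval (({⟨i, p⟩} + {⟨i, q⟩} : FormalSum F).cut (spine n)) := fun co n => by
    rw [cut_add, co.eval_add, co.eval_cut_singleton, co.eval_cut_singleton, co.eval_cut_singleton]
    dsimp only
    rw [ColoredPath.cutValue_add, (co.isCuHom_leg i).map_add]
  rw [← mk_add, ← cutSeq_add]
  exact le_antisymm (mk_cutSeq_le_mk_cutSeq fun n => ⟨n, fun co => (heval co n).le⟩)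
    (mk_cutSeq_le_mk_cutSeq fun n => ⟨n, fun co => (heval co n).ge⟩)

theorem colimitLeg_add (i : I) (x y : (F.obj i).carrier) :
    colimitLeg F i (x + y) = colimitLeg F i x + colimitLeg F i y := by
  have hval : ColoredPath.value (F := F)
      ⟨i, (F.obj i).cu.belowTreePath x + (F.obj i).cu.belowTreePath y⟩ = x + y :=
    ((F.obj i).cu.spineSup_add _ _ _ _ _).trans
      (congrArg₂ (· + ·) (value_belowColoredPath i x) (value_belowColoredPath i y))
  rw [← hval]
  exact (mk_cutSeq_singleton ⟨i, _⟩).symm.trans (mk_cutSeq_singleton_add _ _)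

theorem colimitLeg_wayBelow {i : I} {x y : (F.obj i).carrier} (h : WayBelow x y) :
    WayBelow (colimitLeg F i x) (colimitLeg F i y) := by
  obtain ⟨m, hm⟩ := (F.obj i).cu.exists_le_belowPath_spine h
  exact mk_wayBelow_mk_of_rel (σ := cutSeq {belowColoredPath F i x})
    (τ := cutSeq {belowColoredPath F i y}) (m := m + 2) fun n => rel_cutSeq_of_coconeLE <|
    coconeLE_cut_singleton (z := belowColoredPath F i x) (z' := belowColoredPath F i y) fun co =>
      (co.isCuHom_leg i).mono (((F.obj i).cu.belowPath_le x _).trans hm)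

theorem colimitLeg_isLUB (i : I) {s : ℕ → (F.obj i).carrier} (hs : Monotone s)
    {x : (F.obj i).carrier} (hx : IsLUB (range s) x) :
    IsLUB (range fun k => colimitLeg F i (s k)) (colimitLeg F i x) := by
  have cu := (F.obj i).cu
  refine isLUB_mk_of_forall_rel (fun k => colimitLeg_mono i (hx.1 ⟨k, rfl⟩)) fun n => ?_
  obtain ⟨k, hk⟩ := (cu.belowPath_wayBelow x (spine (n + 1))).exists_le hs hx
  obtain ⟨m, hm⟩ := cu.exists_le_belowPath_spine
    ((cu.belowPath_wayBelow_belowPath x (spine_lt_spine n.lt_succ_self)).mono le_rfl hk)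
  exact ⟨k, _, rfl, m + 2, rel_cutSeq_of_coconeLE <| coconeLE_cut_singleton
    (z := belowColoredPath F i x) (z' := belowColoredPath F i (s k)) fun co =>
      (co.isCuHom_leg i).mono hm⟩

theorem isCuHom_colimitLeg (i : I) : IsCuHom (colimitLeg F i) where
  map_zero := colimitLeg_zero i
  map_add := colimitLeg_add i
  mono := colimitLeg_mono i
  map_wayBelow _ _ := colimitLeg_wayBelow
  map_seqSup _ hs _ := colimitLeg_isLUB i hs

theorem colimitLeg_map {i j : I} (η : i ⟶ j) (x : (F.obj i).carrier) :
    colimitLeg F j ((F.map η).1 x) = colimitLeg F i x := by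
  have hη := (F.map η).2.1
  have hlub := hη.map_seqSup _ ((F.obj i).cu.belowPath_spine_mono x) x
    ((F.obj i).cu.isLUB_belowPath_spine x)
  refine le_antisymm (mk_cutSeq_singleton_le fun n => ?_) (mk_cutSeq_singleton_le fun n => ?_)
  · obtain ⟨m, hm⟩ := ((F.obj j).cu.belowPath_wayBelow _ (spine n)).exists_le
      (hη.mono.comp ((F.obj i).cu.belowPath_spine_mono x)) hlub
    exact ⟨m, fun co => ((co.isCuHom_leg j).mono hm).trans_eq (co.leg_map η _)⟩
  · obtain ⟨m, hm⟩ := (F.obj j).cu.exists_le_belowPath_spine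
      (hη.map_wayBelow _ _ ((F.obj i).cu.belowPath_wayBelow x (spine n)))
    exact ⟨m, fun co => (co.leg_map η _).symm.trans_le ((co.isCuHom_leg j).mono hm)⟩

theorem mk_cutSeq_mono (σ : (colimitBasis F).incSeq) :
    Monotone fun n => Completion.mk (cutSeq (σ.1 n)) :=
  monotone_nat_of_le_succ fun n m => by
    obtain ⟨w, hw⟩ := σ.2 n
    exact ⟨w.length + 1, rel_cut_of_coconeLE_cut fun co => (co.eval_cut_le _ _).trans (hw co)⟩

theorem isLUB_mk_cutSeq (σ : (colimitBasis F).incSeq) :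
    IsLUB (range fun n => Completion.mk (cutSeq (σ.1 n))) (Completion.mk σ) := by
  refine isLUB_mk_of_forall_rel (fun n m => ?_) fun n => ?_ <;> obtain ⟨w, hw⟩ := σ.2 n
  · exact ⟨n + 1, w, fun co => (co.eval_cut_le _ _).trans (hw co)⟩
  · exact ⟨n + 1, _, rfl, w.length + 1, rel_cut_of_coconeLE_cut hw⟩

theorem colimit_induction {P : ColimitCarrier F → Prop} (zero : P 0)
    (add : ∀ x y, P x → P y → P (x + y)) (leg : ∀ i x, P (colimitLeg F i x))
    (sup : ∀ s : ℕ → ColimitCarrier F, Monotone s → (∀ n, P (s n)) →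
      ∀ a, IsLUB (range s) a → P a)
    (x : ColimitCarrier F) : P x := by
  have hcut : ∀ c : FormalSum F, P (Completion.mk (cutSeq c)) := by
    intro c
    induction c using Multiset.induction_on with
    | empty => exact zero
    | cons z c ih =>
      rw [← Multiset.singleton_add, cutSeq_add, mk_add, mk_cutSeq_singleton]
      exact add _ _ (leg _ _) ih
  obtain ⟨σ, rfl⟩ := mk_surjective x
  exact sup _ (mk_cutSeq_mono σ) (fun n => hcut _) _ (isLUB_mk_cutSeq σ)

theorem colimit_hom_ext {T : Type*} [AddCommMonoid T] [PartialOrder T]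
    {k k' : ColimitCarrier F → T} (hk : IsCuHom k) (hk' : IsCuHom k')
    (h : ∀ i x, k (colimitLeg F i x) = k' (colimitLeg F i x)) : k = k' :=
  funext <| colimit_induction (hk.map_zero.trans hk'.map_zero.symm)
    (fun x y hx hy => by rw [hk.map_add, hk'.map_add, hx, hy]) h
    fun s hs hsk a ha => (hk.map_seqSup s hs a ha).unique <| by
      simpa only [hsk] using hk'.map_seqSup s hs a ha

section Desc

variable (co : CuCocone F)

theorem CuCocone.eval_wayBelow_eval {c d : FormalSum F} (h : (colimitBasis F).rel c d) :
    WayBelow (co.eval c) (co.eval d) :=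
  let ⟨w, hw⟩ := h
  (co.eval_cut_wayBelow w d).mono (hw co) le_rfl

noncomputable def colimitDesc : ColimitCarrier F → co.pt := lift co.cu co.eval_wayBelow_eval

theorem isCuHom_colimitDesc : IsCuHom (colimitDesc co) :=
  isCuHom_lift _ _ co.eval_zero co.eval_add

theorem colimitDesc_leg (i : I) (x : (F.obj i).carrier) :
    colimitDesc co (colimitLeg F i x) = co.leg i x := by
  refine (isLUB_lift_mk co.cu co.eval_wayBelow_eval (cutSeq {belowColoredPath F i x})).unique ?_
  have hz := ColoredPath.isLUB_cutValue_spine (belowColoredPath F i x)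
  rw [value_belowColoredPath] at hz
  have hleg := (co.isCuHom_leg i).map_seqSup _
    (ColoredPath.cutValue_spine_mono (belowColoredPath F i x)) _ hz
  simp only [cutSeq, co.eval_cut_singleton]
  exact hleg

end Desc

variable (F)

def colimitScale : Set (ColimitCarrier F) :=
  ⋂ (Θ) (_ : IsSupClosedLowerSet Θ ∧ ∀ i, MapsTo (colimitLeg F i) (F.obj i).scale Θ), Θ

variable {F}

theorem colimitScale_subset {Θ : Set (ColimitCarrier F)} (hΘ : IsSupClosedLowerSet Θ)
    (hleg : ∀ i, MapsTo (colimitLeg F i) (F.obj i).scale Θ) : colimitScale F ⊆ Θ :=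
  fun _ hx => mem_iInter₂.1 hx Θ ⟨hΘ, hleg⟩

theorem colimitLeg_mem_colimitScale {i : I} {x : (F.obj i).carrier} (hx : x ∈ (F.obj i).scale) :
    colimitLeg F i x ∈ colimitScale F :=
  mem_iInter₂.2 fun _ hΘ => hΘ.2 i hx

theorem isScale_colimitScale : IsScale (colimitScale F) where
  __ := IsSupClosedLowerSet.iInter fun _ => IsSupClosedLowerSet.iInter fun hΘ => hΘ.1
  generates _ hJ hsub := eq_univ_of_forall <| colimit_induction hJ.zero_mem hJ.add_mem
    (fun i x => eq_univ_iff_forall.1 ((F.obj i).isScale.preimage_eq_univ (isCuHom_colimitLeg i) hJ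
      fun _ hθ => hsub (colimitLeg_mem_colimitScale hθ)) x)
    hJ.seqSup_mem

variable (F)

noncomputable def colimit : CuscCat.{u} where
  carrier := ColimitCarrier F
  cu := cuAxioms
  scale := colimitScale F
  isScale := isScale_colimitScale

noncomputable def colimitCocone : Limits.Cocone F where
  pt := colimit F
  ι.app i := ⟨colimitLeg F i, isCuHom_colimitLeg i, fun _ => colimitLeg_mem_colimitScale⟩
  ι.naturality _ _ η := Subtype.ext (funext (colimitLeg_map η))

variable {F}

def cuCoconeOf (s : Limits.Cocone F) : CuCocone F where
  pt := s.pt.carrier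
  cu := s.pt.cu
  leg i := (s.ι.app i).1
  isCuHom_leg i := (s.ι.app i).2.1
  leg_map _ _ η x := congrArg (fun f => f.1 x) (s.w η)

noncomputable def colimitDescHom (s : Limits.Cocone F) : colimit F ⟶ s.pt :=
  ⟨colimitDesc (cuCoconeOf s), isCuHom_colimitDesc _, colimitScale_subset
    (s.pt.isScale.isSupClosedLowerSet.preimage (isCuHom_colimitDesc _)) fun i θ hθ => by
      show colimitDesc (cuCoconeOf s) (colimitLeg F i θ) ∈ s.pt.scale
      rw [colimitDesc_leg]
      exact (s.ι.app i).2.2 θ hθ⟩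

variable (F)

noncomputable def colimitCoconeIsColimit : Limits.IsColimit (colimitCocone F) where
  desc := colimitDescHom
  fac s i := Subtype.ext (funext (colimitDesc_leg (cuCoconeOf s) i))
  uniq s m hm := Subtype.ext <| colimit_hom_ext m.2.1 (isCuHom_colimitDesc _) fun i x =>
    (congrArg (fun f => f.1 x) (hm i)).trans (colimitDesc_leg (cuCoconeOf s) i x).symm

theorem hasColimit : Limits.HasColimit F :=
  ⟨⟨⟨colimitCocone F, colimitCoconeIsColimit F⟩⟩⟩

end Colimit

end CuscCat

/-- **The category of scaled Cu-semigroups is bicomplete.** -/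
theorem cusc_bicomplete :
    (∀ (I : Type u) (_ : SmallCategory I) (F : I ⥤ CuscCat.{u}), Limits.HasLimit F) ∧
    (∀ (I : Type u) (_ : SmallCategory I) (F : I ⥤ CuscCat.{u}), Limits.HasColimit F) :=
  ⟨fun _ _ F => CuscCat.hasLimit F, fun _ _ F => CuscCat.hasColimit F⟩
end

section
/- Property (S) passes to products: if (A_j)_{j∈J} is a family of C*-algebras each having property (S), then the product C*-algebra ∏_{j∈J} A_j also has property (S). -/
/-!
STATEMENT 10: Property (S) passes to products: if (A_j) is a family of C*-algebras
each having property (S), then the product C*-algebra ∏_j A_j (bounded families with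
componentwise operations and supremum norm, i.e. `lp A ∞`) also has property (S).
-/

open scoped ENNReal

noncomputable section

/-- Cuntz subequivalence of positive elements of a C*-algebra:
`a ≾ b` iff `a = lim_n xₙ * b * xₙ*` for some sequence `(xₙ)`. -/
def CuntzSub {A : Type*} [NonUnitalCStarAlgebra A] (a b : A) : Prop :=
  ∃ x : ℕ → A, Filter.Tendsto (fun n => x n * b * star (x n)) Filter.atTop (nhds a)

/-- Cuntz equivalence. -/
def CuntzEquiv {A : Type*} [NonUnitalCStarAlgebra A] (a b : A) : Prop :=
  CuntzSub a b ∧ CuntzSub b a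

/-- An element of a C*-algebra is positive iff it is of the form `y* * y`. -/
def IsPos {A : Type*} [NonUnitalCStarAlgebra A] (a : A) : Prop := ∃ y, a = star y * y

/-- The `ε`-cut-down `(a - ε)₊` of an element, obtained by applying the continuous
functional calculus with the function `t ↦ max (t - ε) 0`. -/
def cutDown {A : Type*} [NonUnitalCStarAlgebra A] (a : A) (ε : ℝ) : A :=
  cfcₙ (fun t : ℝ => max (t - ε) 0) a

/-- Property (S) of Hjelmborg–Rørdam: for every positive `a` and every `ε > 0` there
are a positive `b` and an `x` with `a = x* x`, `b = x x*` and `‖a b‖ ≤ ε`.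
(The element `b = x x*` is automatically positive.) -/
def PropertyS (A : Type*) [NonUnitalCStarAlgebra A] : Prop :=
  ∀ a : A, IsPos a → ∀ ε : ℝ, 0 < ε →
    ∃ b x : A, a = star x * x ∧ b = x * star x ∧ ‖a * b‖ ≤ ε

/-- **Property (S) passes to products.** -/
theorem propertyS_prod {J : Type*} (A : J → Type*) [∀ j, NonUnitalCStarAlgebra (A j)]
    (h : ∀ j, PropertyS (A j)) : PropertyS (lp A ∞) := by
  rintro a ⟨y, hy⟩ ε hε
  have ha : ∀ j, IsPos (a j) := fun j => ⟨y j, by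
    simp [hy, lp.infty_coeFn_mul, lp.coeFn_star]⟩
  choose b x hx hb hab using fun j => h j (a j) (ha j) ε hε
  have hxnorm : ∀ j, ‖x j‖ ≤ Real.sqrt ‖a‖ := by
    intro j
    have h1 : ‖x j‖ ^ 2 = ‖a j‖ := by
      rw [hx j, CStarRing.norm_star_mul_self]; ring
    have h2 : ‖a j‖ ≤ ‖a‖ := lp.norm_apply_le_norm (by norm_num) a j
    have := Real.sqrt_le_sqrt (h1.le.trans h2)
    rwa [Real.sqrt_sq (norm_nonneg _)] at this
  have hxmem : Memℓp x ∞ := memℓp_infty ⟨Real.sqrt ‖a‖, by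
    rintro r ⟨j, rfl⟩; exact hxnorm j⟩
  set X : lp A ∞ := ⟨x, hxmem⟩ with hX
  have hXapp : ∀ j, X j = x j := fun j => rfl
  refine ⟨X * star X, X, ?_, rfl, ?_⟩
  · apply lp.ext
    funext j
    simp only [lp.infty_coeFn_mul, lp.coeFn_star, Pi.mul_apply, Pi.star_apply, hXapp]
    exact hx j
  · rw [lp.norm_eq_ciSup]
    refine Real.iSup_le (fun j => ?_) hε.le
    have : (a * (X * star X)) j = a j * b j := by
      simp only [lp.infty_coeFn_mul, lp.coeFn_star, Pi.mul_apply, Pi.star_apply, hXapp,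
        hb j]
    rw [this]
    exact hab j

end
end

section
/- Let A be a C*-algebra, let a, c be positive elements of A, and let 0 < δ < 1/2 be such that c is Cuntz subequivalent to (a − δ)_+. Then there exists a positive contraction b ∈ A such that b is Cuntz equivalent to a and c is Cuntz subequivalent to (b − 1/2)_+. -/
/-!
STATEMENT 12: Let A be a C*-algebra, a, c positive elements of A, and 0 < δ < 1/2
with c ≾ (a − δ)₊.  Then there exists a positive contraction b ∈ A such that b is
Cuntz equivalent to a and c ≾ (b − 1/2)₊.
-/

open scoped ENNReal

noncomputable section

/-
Take `b = g(a)` with `g(t) = min (t / 2δ) 1`. For functions of one positive element,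
`f(a) ≾ g(a)` as soon as `f = h * g` on the spectrum with `h ≥ 0` continuous. The three required
relations come from `g(t) = t / max t 2δ`, `t = max t 2δ * g(t)` and
`(t - δ)₊ = 2 max δ (t - δ) * (g(t) - 1/2)₊`, the last one composed with `c ≾ (a - δ)₊`.
-/

section CuntzSub

variable {A : Type*} [NonUnitalCStarAlgebra A]

lemma cuntzSub_iff_mem_closure {a b : A} :
    CuntzSub a b ↔ a ∈ closure (Set.range fun x : A => x * b * star x) := by
  rw [mem_closure_iff_seq_limit]
  constructor
  · rintro ⟨x, hx⟩
    exact ⟨_, fun n => ⟨x n, rfl⟩, hx⟩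
  · rintro ⟨y, hy, hlim⟩
    choose x hx using hy
    exact ⟨x, by simpa only [hx] using hlim⟩

lemma CuntzSub.trans {a b c : A} (hab : CuntzSub a b) (hbc : CuntzSub b c) : CuntzSub a c := by
  rw [cuntzSub_iff_mem_closure] at *
  refine closure_minimal ?_ isClosed_closure hab
  rintro _ ⟨x, rfl⟩
  refine map_mem_closure (f := fun z => x * z * star x) (by fun_prop) hbc ?_
  rintro _ ⟨y, rfl⟩
  exact ⟨x * y, by simp only [star_mul, mul_assoc]⟩

end CuntzSub

lemma tendstoUniformly_min_mul_abs_pow_mul {f : ℝ → ℝ} (hf : ContinuousAt f 0) (hf0 : f 0 = 0)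
    (k : ℕ) :
    TendstoUniformly (fun (n : ℕ) (t : ℝ) => min (n * |t|) 1 ^ k * f t) f Filter.atTop := by
  rw [Metric.tendstoUniformly_iff]
  intro ε hε
  obtain ⟨η, hη, hfη⟩ := Metric.continuousAt_iff.mp hf ε hε
  obtain ⟨N, hN⟩ := exists_nat_gt η⁻¹
  filter_upwards [Filter.eventually_ge_atTop N] with n hn t
  have hnη : 1 < n * η := (inv_lt_iff_one_lt_mul₀ hη).1 (hN.trans_le (Nat.cast_le.mpr hn))
  set φ := min (n * |t|) 1
  have hφ0 : 0 ≤ φ := by positivity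
  have hφ1 : φ ≤ 1 := min_le_right _ _
  rcases le_or_gt 1 (n * |t|) with ht | ht
  · simp [φ, min_eq_right ht, hε]
  · have htη : |t| < η := by
      by_contra! h
      nlinarith [mul_le_mul_of_nonneg_left h (Nat.cast_nonneg n)]
    have hft : |f t| < ε := by simpa [hf0] using hfη (x := t) (by simpa using htη)
    calc dist (f t) (φ ^ k * f t) = (1 - φ ^ k) * |f t| := by
          rw [Real.dist_eq, ← one_sub_mul, abs_mul,
            abs_of_nonneg (sub_nonneg.mpr (pow_le_one₀ hφ0 hφ1))]
      _ ≤ |f t| := mul_le_of_le_one_left (abs_nonneg _) (sub_le_self _ (pow_nonneg hφ0 k))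
      _ < ε := hft

section CStar

variable {A : Type*} [NonUnitalCStarAlgebra A]

lemma IsPos.isSelfAdjoint {a : A} (ha : IsPos a) : IsSelfAdjoint a := by
  obtain ⟨y, rfl⟩ := ha
  exact IsSelfAdjoint.star_mul_self y

lemma IsPos.quasispectrum_nonneg {a : A} (ha : IsPos a) : ∀ t ∈ quasispectrum ℝ a, 0 ≤ t := by
  obtain ⟨y, rfl⟩ := ha
  intro t ht
  rw [Unitization.quasispectrum_eq_spectrum_inr' ℝ ℂ, Unitization.inr_mul,
    Unitization.inr_star] at ht
  exact spectrum_star_mul_self_nonneg t ht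

lemma isPos_cfcₙ (a : A) {g : ℝ → ℝ} (hg : Continuous g) (hg0 : g 0 = 0)
    (hg_nonneg : ∀ t ∈ quasispectrum ℝ a, 0 ≤ g t) : IsPos (cfcₙ g a) := by
  refine ⟨cfcₙ (fun t => √(g t)) a, ?_⟩
  rw [IsSelfAdjoint.cfcₙ.star_eq, ← cfcₙ_mul _ _ a]
  exact cfcₙ_congr fun t ht => (Real.mul_self_sqrt (hg_nonneg t ht)).symm

lemma cutDown_cfcₙ {a : A} (ha : IsSelfAdjoint a) {g : ℝ → ℝ} (hg : Continuous g)
    (hg0 : g 0 = 0) {ε : ℝ} (hε : 0 ≤ ε) :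
    cutDown (cfcₙ g a) ε = cfcₙ (fun t => max (g t - ε) 0) a := by
  rw [cutDown, ← cfcₙ_comp (fun s => max (s - ε) 0) g a]
  rfl

/-- The cut-offs `min (n |t|) 1 * √(h t)` replace `√h`, which need not vanish at `0`;
their conjugates of `cfcₙ g a` converge to `cfcₙ (h * g) a` because `h * g` vanishes at `0`. -/
lemma cuntzSub_cfcₙ_of_eq_mul (a : A) {f g h : ℝ → ℝ} (hg : Continuous g) (hh : Continuous h)
    (hg0 : g 0 = 0) (hh_nonneg : ∀ t ∈ quasispectrum ℝ a, 0 ≤ h t)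
    (hfg : ∀ t ∈ quasispectrum ℝ a, f t = h t * g t) : CuntzSub (cfcₙ f a) (cfcₙ g a) := by
  let s (n : ℕ) (t : ℝ) : ℝ := min (n * |t|) 1 * √(h t)
  have hconj (n : ℕ) : cfcₙ (s n) a * cfcₙ g a * star (cfcₙ (s n) a) =
      cfcₙ (fun t : ℝ => min (n * |t|) 1 ^ 2 * (h t * g t)) a := by
    rw [IsSelfAdjoint.cfcₙ.star_eq, ← cfcₙ_mul _ _ a, ← cfcₙ_mul _ _ a]
    refine cfcₙ_congr fun t ht => ?_
    have hsqrt := Real.mul_self_sqrt (hh_nonneg t ht)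
    simp only [s]
    linear_combination (min (n * |t|) 1 ^ 2 * g t) * hsqrt
  refine ⟨fun n => cfcₙ (s n) a, ?_⟩
  simp only [hconj, cfcₙ_congr hfg]
  refine tendsto_cfcₙ_fun ?_ (.of_forall fun n => by fun_prop) (.of_forall fun n => by simp [hg0])
  exact (tendstoUniformly_min_mul_abs_pow_mul (hh.mul hg).continuousAt (by simp [hg0]) 2)
    |>.tendstoUniformlyOn

end CStar

def ramp (r : ℝ) (t : ℝ) : ℝ := min (t / r) 1

@[fun_prop]
lemma continuous_ramp (r : ℝ) : Continuous (ramp r) := by unfold ramp; fun_prop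

@[simp]
lemma ramp_zero (r : ℝ) : ramp r 0 = 0 := by simp [ramp]

lemma ramp_nonneg {r t : ℝ} (hr : 0 ≤ r) (ht : 0 ≤ t) : 0 ≤ ramp r t :=
  le_min (div_nonneg ht hr) zero_le_one

lemma ramp_le_one (r t : ℝ) : ramp r t ≤ 1 := min_le_right _ _

lemma ramp_eq_inv_max_mul {r : ℝ} (hr : 0 < r) (t : ℝ) : ramp r t = (max t r)⁻¹ * t := by
  unfold ramp
  rcases le_total t r with h | h
  · rw [min_eq_left ((div_le_one hr).2 h), max_eq_right h, div_eq_inv_mul]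
  · rw [min_eq_right ((one_le_div hr).2 h), max_eq_left h, inv_mul_cancel₀ (hr.trans_le h).ne']

lemma max_mul_ramp {r : ℝ} (hr : 0 < r) (t : ℝ) : max t r * ramp r t = t := by
  rw [ramp_eq_inv_max_mul hr, mul_inv_cancel_left₀ (hr.trans_le (le_max_right t r)).ne']

lemma max_sub_zero_eq_mul_ramp {δ : ℝ} (hδ : 0 < δ) (t : ℝ) :
    max (t - δ) 0 = 2 * max δ (t - δ) * max (ramp (2 * δ) t - 1 / 2) 0 := by
  unfold ramp
  rcases le_total t δ with h₁ | h₁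
  · have hr : min (t / (2 * δ)) 1 - 1 / 2 ≤ 0 := by
      have : t / (2 * δ) ≤ 1 / 2 := by rw [div_le_iff₀ (by positivity)]; linarith
      linarith [min_le_left (t / (2 * δ)) 1]
    rw [max_eq_right hr, max_eq_right (sub_nonpos.2 h₁), mul_zero]
  rcases le_total t (2 * δ) with h₂ | h₂
  · have hr : min (t / (2 * δ)) 1 = t / (2 * δ) :=
      min_eq_left ((div_le_one (by positivity)).2 h₂)
    have hr' : 0 ≤ t / (2 * δ) - 1 / 2 := by
      rw [sub_nonneg, le_div_iff₀ (by positivity)]; linarith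
    rw [hr, max_eq_left hr', max_eq_left (sub_nonneg.2 h₁), max_eq_left (by linarith : t - δ ≤ δ)]
    field_simp
  · have hr : min (t / (2 * δ)) 1 = 1 := min_eq_right ((one_le_div (by positivity)).2 h₂)
    rw [hr, max_eq_left (sub_nonneg.2 h₁), max_eq_right (by linarith : δ ≤ t - δ)]
    norm_num
    ring

theorem exists_contraction_cutDown_general {A : Type*} [NonUnitalCStarAlgebra A]
    (a c : A) (ha : IsPos a) (δ : ℝ) (hδ0 : 0 < δ)
    (h : CuntzSub c (cutDown a δ)) :
    ∃ b : A, IsPos b ∧ ‖b‖ ≤ 1 ∧ CuntzEquiv b a ∧ CuntzSub c (cutDown b (1 / 2)) := by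
  have hsa : IsSelfAdjoint a := ha.isSelfAdjoint
  have hr : 0 < 2 * δ := by positivity
  have hmax_pos (t : ℝ) : 0 < max t (2 * δ) := hr.trans_le (le_max_right t _)
  have hmax_cont : Continuous fun t : ℝ => max t (2 * δ) := continuous_id.max continuous_const
  have hramp_nonneg (t : ℝ) (ht : t ∈ quasispectrum ℝ a) : 0 ≤ ramp (2 * δ) t :=
    ramp_nonneg hr.le (ha.quasispectrum_nonneg t ht)
  refine ⟨cfcₙ (ramp (2 * δ)) a, isPos_cfcₙ a (continuous_ramp _) (ramp_zero _) hramp_nonneg,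
    norm_cfcₙ_le fun t ht => ?_, ⟨?_, ?_⟩, ?_⟩
  · rw [Real.norm_of_nonneg (hramp_nonneg t ht)]
    exact ramp_le_one _ t
  · conv_rhs => rw [← cfcₙ_id' ℝ a]
    exact cuntzSub_cfcₙ_of_eq_mul a continuous_id (hmax_cont.inv₀ (hmax_pos · |>.ne')) rfl
      (fun t _ => (inv_pos.2 (hmax_pos t)).le) fun t _ => ramp_eq_inv_max_mul hr t
  · conv_lhs => rw [← cfcₙ_id' ℝ a]
    exact cuntzSub_cfcₙ_of_eq_mul a (continuous_ramp _) hmax_cont (ramp_zero _)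
      (fun t _ => (hmax_pos t).le) fun t _ => (max_mul_ramp hr t).symm
  · rw [cutDown_cfcₙ hsa (continuous_ramp _) (ramp_zero _) (by norm_num)]
    exact h.trans (cuntzSub_cfcₙ_of_eq_mul a (by fun_prop) (by fun_prop) (by simp)
      (fun t _ => by positivity) fun t _ => max_sub_zero_eq_mul_ramp hδ0 t)

/-- **Lemma: improving a cut-down to level 1/2.** -/
theorem exists_contraction_cutDown {A : Type*} [NonUnitalCStarAlgebra A]
    (a c : A) (ha : IsPos a) (hc : IsPos c) (δ : ℝ) (hδ0 : 0 < δ) (hδ : δ < 1 / 2)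
    (h : CuntzSub c (cutDown a δ)) :
    ∃ b : A, IsPos b ∧ ‖b‖ ≤ 1 ∧ CuntzEquiv b a ∧ CuntzSub c (cutDown b (1 / 2)) :=
  exists_contraction_cutDown_general a c ha δ hδ0 h
end
end
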